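/- arXiv:1705.03294 — 9 statements merged into one kernel-verified Lean document; each statement's English description precedes it below -/
import Mathlib

section
/- Let n ≥ 2 and let X₁,…,X_n, X′₁,…,X′_n be i.i.d. copies of a centered square-integrable real random variable X, and let I be a random index, uniformly distributed on {1,…,n} and independent of (X₁,…,X_n,X′₁,…,X′_n). Let f : {1,…,n}² → ℝ be symmetric with f(i,i)=0 for all i, set Q = ∑_{1≤i<j≤n} f(i,j)·X_i·X_j, and let Q′ be obtained from Q by replacing X_I by X′_I, i.e. Q′ = ∑_{1≤i<j≤n, i≠I, j≠I} f(i,j)X_iX_j + ∑_{i<I} f(i,I)X_iX′_I + ∑_{j>I} f(I,j)X′_IX_j. Then, almost surely, E[Q − Q′ | σ(X₁,…,X_n)] = (2/n)·Q; consequently E[Q′ | σ(Q)] = (1 − 2/n)·Q almost surely, i.e. (Q,Q′) is a λ-Stein pair with λ = 2/n. -/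
/-!
Only the `I`-th coordinate changes, so `Q - Q' = (X_I - X'_I) * S_I` with `S_k = ∑_j f k j * X_j`.
Conditioning first on all of `(X, X')`, the independent uniform index averages this to
`n⁻¹ * ∑_k (X_k - X'_k) * S_k`; conditioning further on `X` removes the `X'_k`-terms (`X'_k` is
centred and independent of `X`, while `S_k` is a function of `X`), leaving
`n⁻¹ * ∑_k X_k * S_k = (2 / n) * Q`. The Stein-pair identity then follows by the tower property,
since `σ(Q) ≤ σ(X)`.
-/

open MeasureTheory ProbabilityTheory
open scoped ENNReal

section PairSum

open Finset

variable {ι R : Type*} [Fintype ι] [LinearOrder ι]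

def pairSum [CommRing R] (f : ι → ι → R) (x : ι → R) : R :=
  ∑ p ∈ univ.filter (fun p : ι × ι => p.1 < p.2), f p.1 p.2 * x p.1 * x p.2

lemma two_mul_pairSum [CommRing R] {f : ι → ι → R} (hsym : ∀ i j, f i j = f j i)
    (hdiag : ∀ i, f i i = 0) (x : ι → R) :
    2 * pairSum f x = ∑ i, x i * ∑ j, f i j * x j := by
  simp_rw [mul_sum, ← mul_assoc, mul_comm (x _) (f _ _)]
  have hsplit : ∀ i j, f i j * x i * x j =
      (if i < j then f i j * x i * x j else 0) + (if j < i then f j i * x j * x i else 0) := by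
    intro i j
    rcases lt_trichotomy i j with h | rfl | h
    · simp [h, h.not_gt]
    · simp [hdiag]
    · rw [if_neg h.not_gt, if_pos h, hsym]; ring
  rw [sum_congr rfl fun i _ => sum_congr rfl fun j _ => hsplit i j]
  simp_rw [sum_add_distrib]
  rw [sum_comm (f := fun i j => if j < i then _ else _), two_mul, pairSum, sum_filter,
    Fintype.sum_prod_type]

lemma pairSum_sub_pairSum_ite [Field R] [CharZero R] [DecidableEq ι] {f : ι → ι → R}
    (hsym : ∀ i j, f i j = f j i) (hdiag : ∀ i, f i i = 0) (x y : ι → R) (k : ι) :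
    pairSum f x - pairSum f (fun i => if i = k then y i else x i)
      = (x k - y k) * ∑ j, f k j * x j := by
  -- after doubling both sides are full double sums, in which only row and column `k` change
  refine mul_left_cancel₀ (two_ne_zero' R) ?_
  have hterm : ∀ i j, x i * (f i j * x j) -
      (if i = k then y i else x i) * (f i j * if j = k then y j else x j) =
      (if i = k then (x k - y k) * (f k j * x j) else 0) +
        (if j = k then (x k - y k) * (f k i * x i) else 0) := by
    intro i j
    by_cases hi : i = k <;> by_cases hj : j = k
    · simp [hi, hj, hdiag]
    · simp only [hi, hj, ↓reduceIte, add_zero]; ring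
    · simp only [hi, hj, hsym i k, ↓reduceIte, zero_add]; ring
    · simp [hi, hj]
  rw [mul_sub, two_mul_pairSum hsym hdiag, two_mul_pairSum hsym hdiag, ← sum_sub_distrib]
  simp_rw [mul_sum, ← sum_sub_distrib, hterm, sum_add_distrib, sum_ite_irrel, sum_const_zero,
    sum_ite_eq', mem_univ, if_true, ← mul_sum]
  ring

end PairSum

lemma ProbabilityTheory.iIndepFun.indepFun_pi_of_notMem_range {Ω κ ι β : Type*}
    [MeasurableSpace Ω] {μ : Measure Ω} [MeasurableSpace β] [Fintype ι] {F : κ → Ω → β}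
    (hF : iIndepFun F μ) (hFm : ∀ j, Measurable (F j)) {e : ι → κ} {j : κ}
    (hj : j ∉ Set.range e) :
    IndepFun (F j) (fun ω i => F (e i) ω) μ := by
  classical
  have hdisj : Disjoint ({j} : Finset κ) (Finset.univ.image e) := by simpa using hj
  exact (hF.indepFun_finset _ _ hdisj hFm).comp
    (measurable_pi_apply ⟨j, Finset.mem_singleton_self j⟩)
    (measurable_pi_lambda _ fun i => measurable_pi_apply ⟨e i, by simp⟩)

lemma measurable_comap_pi_apply {Ω κ β : Type*} [MeasurableSpace β] (F : κ → Ω → β) (k : κ) :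
    Measurable[MeasurableSpace.comap (fun ω k => F k ω) MeasurableSpace.pi] (F k) :=
  (measurable_pi_apply k).comp (comap_measurable fun ω k => F k ω)

lemma comap_pi_comp_le {Ω κ ι β : Type*} [MeasurableSpace β] (F : κ → Ω → β) (e : ι → κ) :
    MeasurableSpace.comap (fun ω i => F (e i) ω) MeasurableSpace.pi
      ≤ MeasurableSpace.comap (fun ω k => F k ω) MeasurableSpace.pi := by
  rw [show (fun ω i => F (e i) ω) = (fun g i => g (e i)) ∘ fun ω k => F k ω from rfl,
    ← MeasurableSpace.comap_comp]
  exact MeasurableSpace.comap_mono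
    (measurable_pi_lambda _ fun i => measurable_pi_apply (e i)).comap_le

lemma comp_index_eq_sum_indicator {Ω ι : Type*} [Fintype ι] (I : Ω → ι) (g : ι → Ω → ℝ) :
    (fun ω => g (I ω) ω) = ∑ i, (I ⁻¹' {i}).indicator (g i) := by
  classical
  ext ω; simp [Finset.sum_apply, Set.indicator_apply]

lemma integrable_comp_index {Ω ι : Type*} [MeasurableSpace Ω] {μ : Measure Ω} [Fintype ι]
    [MeasurableSpace ι] [MeasurableSingletonClass ι] {I : Ω → ι} (hI : Measurable I) {g : ι → Ω → ℝ}
    (hgi : ∀ i, Integrable (g i) μ) : Integrable (fun ω => g (I ω) ω) μ := by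
  rw [comp_index_eq_sum_indicator]
  exact integrable_finsetSum' _ fun i _ => (hgi i).indicator (hI (measurableSet_singleton i))

section CondExp

variable {Ω : Type*} {m m' m0 : MeasurableSpace Ω} {μ : Measure Ω} [IsFiniteMeasure μ]

lemma condExp_indicator_of_indep (hm' : m' ≤ m0) (hm : m ≤ m0)
    (hind : Indep m' m μ) {s : Set Ω} (hs : MeasurableSet[m'] s) {g : Ω → ℝ}
    (hg : StronglyMeasurable[m] g) (hgi : Integrable g μ) :
    μ[s.indicator g | m] =ᵐ[μ] fun ω => μ.real s * g ω := by
  have hsplit : s.indicator g = g * s.indicator 1 := by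
    ext ω; by_cases h : ω ∈ s <;> simp [h]
  have hint : Integrable (s.indicator (1 : Ω → ℝ)) μ :=
    (integrable_const (1 : ℝ)).indicator (hm' _ hs)
  have hprob : μ[s.indicator 1 | m] =ᵐ[μ] fun _ => μ.real s := by
    simpa [integral_indicator_one (hm' _ hs)] using
      condExp_indep_eq hm' hm ((stronglyMeasurable_one (β := ℝ)).indicator hs) hind
  rw [hsplit]
  filter_upwards [condExp_mul_of_stronglyMeasurable_left hg
    (hsplit ▸ hgi.indicator (hm' _ hs)) hint, hprob] with ω h1 h2
  rw [h1, Pi.mul_apply, h2, mul_comm]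

lemma condExp_comp_of_indep_index {ι : Type*} [Fintype ι] [MeasurableSpace ι]
    [MeasurableSingletonClass ι] {I : Ω → ι} (hI : Measurable I) (hm : m ≤ m0)
    (hind : Indep (MeasurableSpace.comap I inferInstance) m μ) {g : ι → Ω → ℝ}
    (hg : ∀ i, StronglyMeasurable[m] (g i)) (hgi : ∀ i, Integrable (g i) μ) :
    μ[fun ω => g (I ω) ω | m] =ᵐ[μ] fun ω => ∑ i, μ.real (I ⁻¹' {i}) * g i ω := by
  have hsets : ∀ i, MeasurableSet[MeasurableSpace.comap I inferInstance] (I ⁻¹' {i}) :=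
    fun i => ⟨{i}, measurableSet_singleton i, rfl⟩
  have hterms := ae_all_iff.mpr fun i =>
    condExp_indicator_of_indep hI.comap_le hm hind (hsets i) (hg i) (hgi i)
  rw [comp_index_eq_sum_indicator]
  filter_upwards [condExp_finsetSum (s := Finset.univ)
    (fun i _ => (hgi i).indicator (hI (measurableSet_singleton i))) m, hterms] with ω hsum hω
  simp [hsum, Finset.sum_apply, hω]

lemma condExp_mul_eq_zero_of_indep (hm : m ≤ m0) {Z W : Ω → ℝ} (hZ : Measurable Z)
    (hind : Indep (MeasurableSpace.comap Z inferInstance) m μ) (hZ0 : ∫ ω, Z ω ∂μ = 0)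
    (hZi : Integrable Z μ) (hW : StronglyMeasurable[m] W) (hWZ : Integrable (W * Z) μ) :
    μ[W * Z | m] =ᵐ[μ] 0 := by
  have hZm : StronglyMeasurable[MeasurableSpace.comap Z inferInstance] Z :=
    (Measurable.of_comap_le le_rfl).stronglyMeasurable
  filter_upwards [condExp_mul_of_stronglyMeasurable_left hW hWZ hZi,
    condExp_indep_eq hZ.comap_le hm hZm hind] with ω h1 h2
  simp [h1, h2, hZ0]

lemma condExp_comap_eq_of_condExp_sub (hm : m ≤ m0) {T T' : Ω → ℝ} (hT : Measurable[m] T)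
    (hTi : Integrable T μ) (hDi : Integrable (fun ω => T ω - T' ω) μ) {c : ℝ}
    (h : μ[fun ω => T ω - T' ω | m] =ᵐ[μ] fun ω => c * T ω) :
    μ[T' | MeasurableSpace.comap T inferInstance] =ᵐ[μ] fun ω => (1 - c) * T ω := by
  set mT := MeasurableSpace.comap T inferInstance
  have hmT : mT ≤ m := hT.comap_le
  have hTT : μ[T | mT] = T :=
    condExp_of_stronglyMeasurable (hmT.trans hm)
      (Measurable.of_comap_le le_rfl).stronglyMeasurable hTi
  have hdiff : μ[fun ω => T ω - T' ω | mT] =ᵐ[μ] fun ω => c * T ω := by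
    refine (condExp_condExp_of_le hmT hm).symm.trans
      ((condExp_congr_ae h).trans ((condExp_smul c T mT).trans ?_))
    rw [hTT]; rfl
  have hT' : T' = T - fun ω => T ω - T' ω := by ext; simp
  rw [hT']
  filter_upwards [condExp_sub hTi hDi mT, hdiff] with ω h1 h2
  rw [h1, Pi.sub_apply, hTT, h2]; ring

lemma condExp_sub_mul_comp_of_indep_index {ι : Type*} [Fintype ι] [MeasurableSpace ι]
    [MeasurableSingletonClass ι] (hm : m ≤ m') (hm' : m' ≤ m0)
    {I : Ω → ι} (hI : Measurable I) (hIind : Indep (MeasurableSpace.comap I inferInstance) m' μ)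
    {p : ℝ} (hIunif : ∀ i, μ.real (I ⁻¹' {i}) = p) {Y Y' W : ι → Ω → ℝ}
    (hY : ∀ i, StronglyMeasurable[m] (Y i)) (hW : ∀ i, StronglyMeasurable[m] (W i))
    (hY' : ∀ i, StronglyMeasurable[m'] (Y' i))
    (hY'ind : ∀ i, Indep (MeasurableSpace.comap (Y' i) inferInstance) m μ)
    (hY'0 : ∀ i, ∫ ω, Y' i ω ∂μ = 0) (hY'i : ∀ i, Integrable (Y' i) μ)
    (hYW : ∀ i, Integrable (Y i * W i) μ) (hWY' : ∀ i, Integrable (W i * Y' i) μ) :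
    μ[fun ω => (Y (I ω) ω - Y' (I ω) ω) * W (I ω) ω | m]
      =ᵐ[μ] fun ω => p * ∑ i, Y i ω * W i ω := by
  set g : ι → Ω → ℝ := fun i => Y i * W i - W i * Y' i
  have hg : ∀ i, StronglyMeasurable[m'] (g i) := fun i =>
    (((hY i).mono hm).mul ((hW i).mono hm)).sub (((hW i).mono hm).mul (hY' i))
  have hgi : ∀ i, Integrable (g i) μ := fun i => (hYW i).sub (hWY' i)
  have hgm : ∀ i, μ[g i | m] =ᵐ[μ] Y i * W i := fun i => by
    have hY'm : Measurable (Y' i) := ((hY' i).mono hm').measurable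
    filter_upwards [condExp_sub (hYW i) (hWY' i) m,
      condExp_mul_eq_zero_of_indep (hm.trans hm') hY'm (hY'ind i) (hY'0 i) (hY'i i) (hW i)
        (hWY' i)] with ω h1 h2
    rw [h1, Pi.sub_apply, h2,
      condExp_of_stronglyMeasurable (hm.trans hm') ((hY i).mul (hW i)) (hYW i)]
    simp
  have hD : (fun ω => (Y (I ω) ω - Y' (I ω) ω) * W (I ω) ω) = fun ω => g (I ω) ω := by
    ext ω; simp only [g, Pi.sub_apply, Pi.mul_apply]; ring
  have hJ : μ[fun ω => g (I ω) ω | m'] =ᵐ[μ] p • ∑ i, g i := by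
    filter_upwards [condExp_comp_of_indep_index hI hm' hIind hg hgi] with ω hω
    rw [hω, Pi.smul_apply, Finset.sum_apply, smul_eq_mul, Finset.mul_sum]
    simp only [hIunif]
  rw [hD]
  refine (condExp_condExp_of_le hm hm').symm.trans ((condExp_congr_ae hJ).trans ?_)
  refine (condExp_smul p _ m).trans ?_
  filter_upwards [condExp_finsetSum (s := Finset.univ) (fun i _ => hgi i) m,
    ae_all_iff.mpr hgm] with ω hsum hω
  rw [Pi.smul_apply, hsum, Finset.sum_apply, smul_eq_mul]
  simp only [hω, Pi.mul_apply]

lemma condExp_resample_sub_mul {ι : Type*} [Fintype ι] [MeasurableSpace ι]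
    [MeasurableSingletonClass ι] {X X' : ι → Ω → ℝ} (hXX' : ∀ p, Measurable (Sum.elim X X' p))
    (hiid : iIndepFun (Sum.elim X X') μ) (hL2 : ∀ p, MemLp (Sum.elim X X' p) 2 μ)
    (hX'0 : ∀ i, ∫ ω, X' i ω ∂μ = 0) {I : Ω → ι} (hI : Measurable I)
    (hIind : IndepFun I (fun ω p => Sum.elim X X' p ω) μ) {p : ℝ}
    (hIunif : ∀ i, μ.real (I ⁻¹' {i}) = p) {W : ι → Ω → ℝ}
    (hW : ∀ i, Measurable[MeasurableSpace.comap (fun ω i => X i ω) inferInstance] (W i))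
    (hWL2 : ∀ i, MemLp (W i) 2 μ) :
    μ[fun ω => (X (I ω) ω - X' (I ω) ω) * W (I ω) ω |
        MeasurableSpace.comap (fun ω i => X i ω) inferInstance]
      =ᵐ[μ] fun ω => p * ∑ i, X i ω * W i ω :=
  condExp_sub_mul_comp_of_indep_index (Y := X) (Y' := X')
    (comap_pi_comp_le (Sum.elim X X') Sum.inl) (measurable_pi_iff.mpr hXX').comap_le hI
    ((IndepFun_iff_Indep _ _ _).mp hIind) hIunif
    (fun i => (measurable_comap_pi_apply X i).stronglyMeasurable)
    (fun i => (hW i).stronglyMeasurable)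
    (fun i => (measurable_comap_pi_apply (Sum.elim X X') (.inr i)).stronglyMeasurable)
    (fun i => (IndepFun_iff_Indep _ _ _).mp
      (hiid.indepFun_pi_of_notMem_range hXX' (j := .inr i) (e := Sum.inl) (by simp)))
    hX'0 (fun i => (hL2 (.inr i)).integrable one_le_two)
    (fun i => (hL2 (.inl i)).integrable_mul (hWL2 i))
    (fun i => (hWL2 i).integrable_mul (hL2 (.inr i)))

end CondExp

theorem stmt8_general {Ω : Type*} [MeasurableSpace Ω] (P : Measure Ω) [IsProbabilityMeasure P]
    (n : ℕ)
    (X0 : Ω → ℝ) (hX0L2 : MemLp X0 2 P)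
    (hX0cent : ∫ ω, X0 ω ∂P = 0)
    (X X' : Fin n → Ω → ℝ)
    (hXmeas : ∀ i, Measurable (X i)) (hX'meas : ∀ i, Measurable (X' i))
    -- `X₁,…,X_n,X′₁,…,X′_n` are i.i.d. copies of `X0`
    (hiid : iIndepFun (Sum.elim X X' : Fin n ⊕ Fin n → Ω → ℝ) P)
    (hid : ∀ p : Fin n ⊕ Fin n, IdentDistrib (Sum.elim X X' p) X0 P P)
    -- `I` is uniform on `{1,…,n}` and independent of `(X, X')`
    (I : Ω → Fin n) (hImeas : Measurable I)
    (hIunif : ∀ i : Fin n, P (I ⁻¹' {i}) = (n : ℝ≥0∞)⁻¹)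
    (hIindep : IndepFun I (fun ω => (fun p : Fin n ⊕ Fin n => Sum.elim X X' p ω)) P)
    (f : Fin n → Fin n → ℝ) (hfsym : ∀ i j, f i j = f j i) (hfdiag : ∀ i, f i i = 0)
    (Q Q' : Ω → ℝ)
    (hQ : ∀ ω, Q ω = ∑ p ∈ Finset.univ.filter (fun p : Fin n × Fin n => p.1 < p.2),
        f p.1 p.2 * X p.1 ω * X p.2 ω)
    (hQ' : ∀ ω, Q' ω = ∑ p ∈ Finset.univ.filter (fun p : Fin n × Fin n => p.1 < p.2),
        f p.1 p.2 * (if p.1 = I ω then X' p.1 ω else X p.1 ω) *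
          (if p.2 = I ω then X' p.2 ω else X p.2 ω)) :
    (P[(fun ω => Q ω - Q' ω)|MeasurableSpace.comap (fun ω (i : Fin n) => X i ω) inferInstance]
        =ᵐ[P] fun ω => (2 / n : ℝ) * Q ω) ∧
    (P[Q'|MeasurableSpace.comap Q inferInstance]
        =ᵐ[P] fun ω => (1 - 2 / n : ℝ) * Q ω) := by
  set Xv : Ω → Fin n → ℝ := fun ω i => X i ω
  have hL2 : ∀ p, MemLp (Sum.elim X X' p) 2 P := fun p => (hid p).symm.memLp_snd hX0L2
  set S : Fin n → Ω → ℝ := fun k ω => ∑ j, f k j * X j ω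
  have hSm : ∀ k, Measurable[MeasurableSpace.comap Xv inferInstance] (S k) := fun k =>
    Finset.measurable_sum _ fun j _ => (measurable_comap_pi_apply X j).const_mul _
  have hSL2 : ∀ k, MemLp (S k) 2 P := fun k => by
    simpa [S, Finset.sum_fn] using
      memLp_finsetSum' Finset.univ fun j _ => (hL2 (.inl j)).const_mul (f k j)
  have hQsum : Q = fun ω => 2⁻¹ * ∑ k, X k ω * S k ω := by
    ext ω; rw [hQ ω, ← two_mul_pairSum hfsym hfdiag, pairSum]; ring
  have hD : (fun ω => Q ω - Q' ω) = fun ω => (X (I ω) ω - X' (I ω) ω) * S (I ω) ω := by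
    ext ω
    rw [hQ ω, hQ' ω]
    exact pairSum_sub_pairSum_ite hfsym hfdiag (fun i => X i ω) (fun i => X' i ω) (I ω)
  have hpart1 : P[fun ω => Q ω - Q' ω | MeasurableSpace.comap Xv inferInstance]
      =ᵐ[P] fun ω => (2 / n : ℝ) * Q ω := by
    rw [hD]
    filter_upwards [condExp_resample_sub_mul (fun p => Sum.rec hXmeas hX'meas p) hiid hL2
      (fun i => (hid (.inr i)).integral_eq.trans hX0cent) hImeas hIindep
      (p := (n : ℝ)⁻¹) (fun i => by simp [measureReal_def, hIunif]) hSm hSL2] with ω hω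
    rw [hω, hQsum]; ring
  refine ⟨hpart1, condExp_comap_eq_of_condExp_sub (measurable_pi_iff.mpr hXmeas).comap_le ?_ ?_ ?_
    hpart1⟩
  · rw [hQsum]
    exact (Finset.measurable_sum _ fun k _ =>
      (measurable_comap_pi_apply X k).mul (hSm k)).const_mul _
  · rw [hQsum]
    exact (integrable_finsetSum _ fun k _ => (hL2 (.inl k)).integrable_mul (hSL2 k)).const_mul _
  · rw [hD]
    exact integrable_comp_index hImeas
      fun k => ((hL2 (.inl k)).sub (hL2 (.inr k))).integrable_mul (hSL2 k)

theorem stmt8 {Ω : Type*} [MeasurableSpace Ω] (P : Measure Ω) [IsProbabilityMeasure P]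
    (n : ℕ) (hn : 2 ≤ n)
    (X0 : Ω → ℝ) (hX0meas : Measurable X0) (hX0L2 : MemLp X0 2 P)
    (hX0cent : ∫ ω, X0 ω ∂P = 0)
    (X X' : Fin n → Ω → ℝ)
    (hXmeas : ∀ i, Measurable (X i)) (hX'meas : ∀ i, Measurable (X' i))
    -- `X₁,…,X_n,X′₁,…,X′_n` are i.i.d. copies of `X0`
    (hiid : iIndepFun (Sum.elim X X' : Fin n ⊕ Fin n → Ω → ℝ) P)
    (hid : ∀ p : Fin n ⊕ Fin n, IdentDistrib (Sum.elim X X' p) X0 P P)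
    -- `I` is uniform on `{1,…,n}` and independent of `(X, X')`
    (I : Ω → Fin n) (hImeas : Measurable I)
    (hIunif : ∀ i : Fin n, P (I ⁻¹' {i}) = (n : ℝ≥0∞)⁻¹)
    (hIindep : IndepFun I (fun ω => (fun p : Fin n ⊕ Fin n => Sum.elim X X' p ω)) P)
    (f : Fin n → Fin n → ℝ) (hfsym : ∀ i j, f i j = f j i) (hfdiag : ∀ i, f i i = 0)
    (Q Q' : Ω → ℝ)
    (hQ : ∀ ω, Q ω = ∑ p ∈ Finset.univ.filter (fun p : Fin n × Fin n => p.1 < p.2),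
        f p.1 p.2 * X p.1 ω * X p.2 ω)
    (hQ' : ∀ ω, Q' ω = ∑ p ∈ Finset.univ.filter (fun p : Fin n × Fin n => p.1 < p.2),
        f p.1 p.2 * (if p.1 = I ω then X' p.1 ω else X p.1 ω) *
          (if p.2 = I ω then X' p.2 ω else X p.2 ω)) :
    (P[(fun ω => Q ω - Q' ω)|MeasurableSpace.comap (fun ω (i : Fin n) => X i ω) inferInstance]
        =ᵐ[P] fun ω => (2 / n : ℝ) * Q ω) ∧
    (P[Q'|MeasurableSpace.comap Q inferInstance]
        =ᵐ[P] fun ω => (1 - 2 / n : ℝ) * Q ω) :=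
  stmt8_general P n X0 hX0L2 hX0cent X X' hXmeas hX'meas hiid hid I hImeas hIunif hIindep f hfsym
    hfdiag Q Q' hQ hQ'
end

section
/- Let d ≥ 2, n ≥ 1, and let f : {1,…,n}^d → ℝ be symmetric under permutations of its arguments and vanishing on diagonals. Then ‖f ⌢_{d−1} f‖ ≥ (1/d)·τ(f), where τ(f) = max_{1≤i≤n} Inf_i(f). Moreover, if d = 2, then ‖f ⌢_1 f − f‖ ≥ (1/2)·τ(f). -/
/-
For symmetric `f` all `d` positions contribute equally to `Inf_j(f)`, so
`Inf_j(f) = d · ∑_i f(j, i)²`. Since the contraction reads its second factor with the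
contracted variables reversed, symmetry turns the diagonal entry `(f ⌢_{d-1} f)(j, j)` into the
same sum `∑_i f(j, i)²`, and a single entry is bounded by the `L²` norm. For `d = 2` the kernel
vanishes at `(j, j)`, so subtracting `f` leaves that entry unchanged.
-/

open MeasureTheory ProbabilityTheory Filter
open scoped BigOperators NNReal ENNReal Topology

noncomputable section

/-- The contraction `f ⌢_q g`, as a function of the two remaining blocks of variables. -/
def contraction (n d p q : ℕ) (f : (Fin d → Fin n) → ℝ) (g : (Fin p → Fin n) → ℝ)
    (t : Fin (d - q) → Fin n) (s : Fin (p - q) → Fin n) : ℝ :=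
  ∑ i : Fin q → Fin n,
    f (fun l =>
      if hl : (l : ℕ) < d - q then t ⟨(l : ℕ), hl⟩
      else i ⟨(l : ℕ) - (d - q), by have := l.isLt; omega⟩) *
    g (fun l =>
      if hl : (l : ℕ) < q then i ⟨q - 1 - (l : ℕ), by omega⟩
      else s ⟨(l : ℕ) - q, by have := l.isLt; omega⟩)

/-- The `L²` norm `‖f ⌢_q g‖` of the contraction. -/
def contrNorm (n d p q : ℕ) (f : (Fin d → Fin n) → ℝ) (g : (Fin p → Fin n) → ℝ) : ℝ :=
  Real.sqrt (∑ t : Fin (d - q) → Fin n, ∑ s : Fin (p - q) → Fin n,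
    contraction n d p q f g t s ^ 2)

/-- The star contraction `f ⋆_r^{r-1} g`, as a function of the two remaining blocks of
variables and of the repeated variable `γ`. -/
def starContraction (n d p r : ℕ) (f : (Fin d → Fin n) → ℝ) (g : (Fin p → Fin n) → ℝ)
    (t : Fin (d - r) → Fin n) (γ : Fin n) (s : Fin (p - r) → Fin n) : ℝ :=
  ∑ i : Fin (r - 1) → Fin n,
    f (fun l =>
      if h1 : (l : ℕ) < d - r then t ⟨(l : ℕ), h1⟩
      else if h2 : (l : ℕ) = d - r then γ
      else i ⟨(l : ℕ) - (d - r) - 1, by have := l.isLt; omega⟩) *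
    g (fun l =>
      if h1 : (l : ℕ) < r - 1 then i ⟨r - 1 - 1 - (l : ℕ), by omega⟩
      else if h2 : (l : ℕ) = r - 1 then γ
      else s ⟨(l : ℕ) - r, by have := l.isLt; omega⟩)

/-- The `L²` norm `‖f ⋆_r^{r-1} g‖` of the star contraction. -/
def starNorm (n d p r : ℕ) (f : (Fin d → Fin n) → ℝ) (g : (Fin p → Fin n) → ℝ) : ℝ :=
  Real.sqrt (∑ t : Fin (d - r) → Fin n, ∑ γ : Fin n, ∑ s : Fin (p - r) → Fin n,
    starContraction n d p r f g t γ s ^ 2)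

/-- The `j`-th influence `Inf_j(f) = ∑_{l=1}^d ∑ f(…,j at position l,…)²`. -/
def influenceGen (n d : ℕ) (f : (Fin d → Fin n) → ℝ) (j : Fin n) : ℝ :=
  ∑ l : Fin d, ∑ i ∈ Finset.univ.filter (fun i : Fin d → Fin n => i l = j), f i ^ 2

/-- `τ(f)`, the maximal influence. -/
def tauGen (n d : ℕ) (f : (Fin d → Fin n) → ℝ) : ℝ :=
  ⨆ j : Fin n, influenceGen n d f j

end

theorem Finset.sum_filter_apply_eq_of_comp_perm {ι α M : Type*} [Fintype ι] [DecidableEq ι]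
    [Fintype α] [DecidableEq α] [AddCommMonoid M] (g : (ι → α) → M)
    (hg : ∀ (σ : Equiv.Perm ι) (x : ι → α), g (x ∘ σ) = g x) (a b : ι) (j : α) :
    ∑ x ∈ Finset.univ.filter (fun x : ι → α => x a = j), g x =
      ∑ x ∈ Finset.univ.filter (fun x : ι → α => x b = j), g x := by
  refine Finset.sum_nbij' (· ∘ Equiv.swap a b) (· ∘ Equiv.swap a b) ?_ ?_ ?_ ?_
    fun x _ => (hg (Equiv.swap a b) x).symm <;>
  simp [Function.comp_def]

theorem Fin.sum_filter_apply_zero_eq {m : ℕ} {α M : Type*} [Fintype α] [DecidableEq α]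
    [AddCommMonoid M] (g : (Fin (m + 1) → α) → M) (j : α) :
    ∑ x ∈ Finset.univ.filter (fun x : Fin (m + 1) → α => x 0 = j), g x =
      ∑ i : Fin m → α, g (Fin.cons j i) := by
  rw [Finset.sum_filter, ← (Fin.consEquiv fun _ => α).sum_comp, Fintype.sum_prod_type]
  simp [Fin.consEquiv]

theorem apply_le_sqrt_sum_sum_sq {α β : Type*} [Fintype α] [Fintype β] (F : α → β → ℝ)
    (a : α) (b : β) : F a b ≤ √(∑ s, ∑ t, F s t ^ 2) := by
  refine (le_abs_self _).trans (Real.abs_le_sqrt ?_)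
  calc F a b ^ 2 ≤ ∑ t, F a t ^ 2 :=
        Finset.single_le_sum (fun t _ => sq_nonneg (F a t)) (Finset.mem_univ b)
    _ ≤ ∑ s, ∑ t, F s t ^ 2 :=
        Finset.single_le_sum (f := fun s => ∑ t, F s t ^ 2)
          (fun s _ => Finset.sum_nonneg fun t _ => sq_nonneg _) (Finset.mem_univ a)

section Symmetric

variable {n m : ℕ} (f : (Fin (m + 1) → Fin n) → ℝ)

theorem influenceGen_eq_mul_sum_cons
    (hsym : ∀ (σ : Equiv.Perm (Fin (m + 1))) (i : Fin (m + 1) → Fin n), f (i ∘ σ) = f i)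
    (j : Fin n) :
    influenceGen n (m + 1) f j = (m + 1) * ∑ i : Fin m → Fin n, f (Fin.cons j i) ^ 2 := by
  have hsq : ∀ (σ : Equiv.Perm (Fin (m + 1))) i, f (i ∘ σ) ^ 2 = f i ^ 2 := by simp [hsym]
  rw [influenceGen, Finset.sum_congr rfl fun l _ =>
    Finset.sum_filter_apply_eq_of_comp_perm (fun i => f i ^ 2) hsq l 0 j]
  simp [Fin.sum_filter_apply_zero_eq]

theorem contraction_const_const_eq_sum_cons
    (hsym : ∀ (σ : Equiv.Perm (Fin (m + 1))) (i : Fin (m + 1) → Fin n), f (i ∘ σ) = f i)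
    (j : Fin n) :
    contraction n (m + 1) (m + 1) m f f (fun _ => j) (fun _ => j) =
      ∑ i : Fin m → Fin n, f (Fin.cons j i) ^ 2 := by
  refine Finset.sum_congr rfl fun i _ => ?_
  rw [sq]
  congr 1
  · congr 1
    funext l
    cases l using Fin.cases <;> simp
  · -- the contracted variables enter the second factor in reverse order
    rw [← hsym Fin.revPerm (Fin.cons j i)]
    congr 1
    funext l
    cases l using Fin.lastCases
    · simp
    · rw [Function.comp_apply, Fin.revPerm_apply, Fin.rev_castSucc, Fin.cons_succ]
      simp [Fin.rev, Nat.sub_add_eq, Nat.sub_right_comm]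

end Symmetric

theorem one_div_mul_influenceGen_le_contrNorm {n d : ℕ} (f : (Fin d → Fin n) → ℝ)
    (hsym : ∀ (σ : Equiv.Perm (Fin d)) (i : Fin d → Fin n), f (i ∘ σ) = f i) (j : Fin n) :
    1 / d * influenceGen n d f j ≤ contrNorm n d d (d - 1) f f := by
  cases d with
  | zero =>
    rw [Nat.cast_zero, div_zero, zero_mul]
    exact Real.sqrt_nonneg _
  | succ m =>
    rw [influenceGen_eq_mul_sum_cons f hsym j, ← contraction_const_const_eq_sum_cons f hsym j,
      Nat.cast_succ, one_div, inv_mul_cancel_left₀ (by positivity)]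
    exact apply_le_sqrt_sum_sum_sq _ _ _

theorem mul_tauGen_le {n d : ℕ} (f : (Fin d → Fin n) → ℝ) {c C : ℝ} (hc : 0 ≤ c) (hC : 0 ≤ C)
    (h : ∀ j, c * influenceGen n d f j ≤ C) : c * tauGen n d f ≤ C := by
  rw [tauGen, Real.mul_iSup_of_nonneg hc]
  exact Real.iSup_le h hC

theorem stmt9 (n d : ℕ) (hd : 2 ≤ d)
    (f : (Fin d → Fin n) → ℝ)
    (hsym : ∀ (σ : Equiv.Perm (Fin d)) (i : Fin d → Fin n), f (i ∘ σ) = f i)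
    (hdiag : ∀ i : Fin d → Fin n, ¬ Function.Injective i → f i = 0) :
    (1 / d : ℝ) * tauGen n d f ≤ contrNorm n d d (d - 1) f f ∧
    (d = 2 →
      (1 / 2 : ℝ) * tauGen n d f ≤
        Real.sqrt (∑ t : Fin (d - 1) → Fin n, ∑ s : Fin (d - 1) → Fin n,
          (contraction n d d 1 f f t s -
            f (fun l =>
              if hl : (l : ℕ) < d - 1 then t ⟨(l : ℕ), hl⟩
              else s ⟨(l : ℕ) - (d - 1), by have := l.isLt; omega⟩)) ^ 2)) := by
  refine ⟨mul_tauGen_le f (by positivity) (Real.sqrt_nonneg _)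
    (one_div_mul_influenceGen_le_contrNorm f hsym), ?_⟩
  rintro rfl
  refine mul_tauGen_le f (by norm_num) (Real.sqrt_nonneg _) fun j => ?_
  have hf_diag : f (fun _ => j) = 0 := hdiag _ fun hinj => zero_ne_one (hinj rfl : (0 : Fin 2) = 1)
  refine (le_of_eq ?_).trans (apply_le_sqrt_sum_sum_sq _ (fun _ => j) (fun _ => j))
  simp only [dite_eq_ite, ite_self, hf_diag, sub_zero]
  have hinfluence : influenceGen n 2 f j = 2 * ∑ i : Fin 1 → Fin n, f (Fin.cons j i) ^ 2 :=
    (influenceGen_eq_mul_sum_cons f hsym j).trans (by norm_num)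
  have hcontraction : contraction n 2 2 1 f f (fun _ => j) (fun _ => j) =
      ∑ i : Fin 1 → Fin n, f (Fin.cons j i) ^ 2 :=
    contraction_const_const_eq_sum_cons f hsym j
  rw [hinfluence, hcontraction]
  ring
end

section
/- Let d ≥ 2, n ≥ 1, and let f : {1,…,n}^d → ℝ be an admissible kernel (mirror symmetric, vanishing on diagonals, with ∑ f² = 1). Then for every q = 1,…,d−1 one has ‖f ⌢_q f‖ ≥ ‖f ⋆_{q+1}^{q} f‖, and moreover ‖f ⌢_{d−1} f‖ ≥ ‖f ⋆_1^0 f‖. -/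
open MeasureTheory ProbabilityTheory Filter
open scoped BigOperators NNReal ENNReal Topology

noncomputable section

/-!
Both inequalities restrict a sum of squares to a subset of its terms. Putting the repeated
variable `γ` at the end of the first block and at the start of the second shows
`(f ⋆_{q+1}^q g)(t, γ, s) = (f ⌢_q g)((t, γ), (γ, s))`, so `‖f ⋆_{q+1}^q g‖²` is part of the
sum `‖f ⌢_q g‖²`. For `r = 1`, mirror symmetry turns `f(t, γ)` into `f(γ, rev t)`, so
`‖f ⋆_1^0 f‖² = ∑_γ (∑_i f(γ, i)²)²`, and `∑_i f(γ, i)²` is the diagonal value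
`(f ⌢_{d-1} f)(γ, γ)`.
-/

theorem Fintype.sum_comp_le_sum_of_injective {α β : Type*} [Fintype α] [Fintype β]
    {e : α → β} (he : e.Injective) {F : β → ℝ} (hF : ∀ b, 0 ≤ F b) :
    ∑ a, F (e a) ≤ ∑ b, F b := by
  classical
  exact (Finset.sum_map Finset.univ ⟨e, he⟩ F).symm.le.trans (Finset.sum_le_univ_sum_of_nonneg hF)

theorem starContraction_succ_eq_contraction {n d p q : ℕ} (hd : q + 1 ≤ d)
    (f : (Fin d → Fin n) → ℝ) (g : (Fin p → Fin n) → ℝ)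
    (t : Fin (d - (q + 1)) → Fin n) (γ : Fin n) (s : Fin (p - (q + 1)) → Fin n) :
    starContraction n d p (q + 1) f g t γ s =
      contraction n d p q f g
        (fun m => if h : (m : ℕ) < d - (q + 1) then t ⟨m, h⟩ else γ)
        (fun m => if h : (m : ℕ) = 0 then γ else s ⟨m - 1, by omega⟩) := by
  unfold starContraction contraction
  refine Finset.sum_congr rfl fun i _ => ?_
  simp only [Nat.add_sub_cancel]
  congr 2 <;> funext l <;> split_ifs <;> first | rfl | omega | (congr 1; ext; simp; omega)

theorem starNorm_succ_le_contrNorm {n d p q : ℕ} (hd : q + 1 ≤ d) (hp : q + 1 ≤ p)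
    (f : (Fin d → Fin n) → ℝ) (g : (Fin p → Fin n) → ℝ) :
    starNorm n d p (q + 1) f g ≤ contrNorm n d p q f g := by
  let e : (Fin (d - (q + 1)) → Fin n) × Fin n × (Fin (p - (q + 1)) → Fin n) →
      (Fin (d - q) → Fin n) × (Fin (p - q) → Fin n) := fun ⟨t, γ, s⟩ =>
    (fun m => if h : (m : ℕ) < d - (q + 1) then t ⟨m, h⟩ else γ,
     fun m => if h : (m : ℕ) = 0 then γ else s ⟨m - 1, by omega⟩)
  have he : e.Injective := by
    rintro ⟨t, γ, s⟩ ⟨t', γ', s'⟩ h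
    simp only [e, Prod.mk.injEq, funext_iff] at h
    obtain ⟨ht, hs⟩ := h
    have hγ : γ = γ' := by simpa using hs ⟨0, by omega⟩
    refine Prod.ext (funext fun m => ?_) (Prod.ext hγ (funext fun m => ?_))
    · simpa using ht ⟨m, by omega⟩
    · simpa using hs ⟨m + 1, by omega⟩
  unfold starNorm contrNorm
  gcongr
  simp only [← Fintype.sum_prod_type']
  refine le_of_eq_of_le ?_ (Fintype.sum_comp_le_sum_of_injective he
    (F := fun y => contraction n d p q f g y.1 y.2 ^ 2) fun _ => sq_nonneg _)
  simp only [starContraction_succ_eq_contraction hd, e]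

section MirrorSymmetric

variable {n d : ℕ} {f : (Fin d → Fin n) → ℝ}

def headSection (f : (Fin d → Fin n) → ℝ) (γ : Fin n) (i : Fin (d - 1) → Fin n) : ℝ :=
  f fun l => if h : (l : ℕ) = 0 then γ else i ⟨l - 1, by omega⟩

theorem starContraction_one_eq {p : ℕ} (hf : ∀ i : Fin d → Fin n, f (i ∘ Fin.rev) = f i)
    (g : (Fin p → Fin n) → ℝ) (t : Fin (d - 1) → Fin n) (γ : Fin n) (s : Fin (p - 1) → Fin n) :
    starContraction n d p 1 f g t γ s = headSection f γ (t ∘ Fin.rev) * headSection g γ s := by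
  have : IsEmpty (Fin (1 - 1)) := Fin.isEmpty'
  rw [starContraction, Fintype.sum_unique, headSection, headSection, ← hf]
  congr 2
  funext l
  simp only [Function.comp_apply, Fin.val_rev]
  split_ifs <;> first | rfl | omega | (congr 1; ext; simp; omega)

theorem contraction_pred_self_diag (hf : ∀ i : Fin d → Fin n, f (i ∘ Fin.rev) = f i)
    (γ : Fin n) :
    contraction n d d (d - 1) f f (fun _ => γ) (fun _ => γ) = ∑ i, headSection f γ i ^ 2 := by
  refine Finset.sum_congr rfl fun i _ => ?_
  rw [sq]
  congr 1
  · rw [headSection]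
    congr 1
    funext l
    split_ifs <;> first | rfl | omega | (congr 1; ext; simp; omega)
  · rw [headSection, ← hf]
    congr 1
    funext l
    simp only [Function.comp_apply, Fin.val_rev]
    split_ifs <;> first | rfl | omega | (congr 1; ext; simp; omega)

theorem starNorm_one_le_contrNorm_pred (hd : 1 ≤ d)
    (hf : ∀ i : Fin d → Fin n, f (i ∘ Fin.rev) = f i) :
    starNorm n d d 1 f f ≤ contrNorm n d d (d - 1) f f := by
  have hrev (γ : Fin n) : ∑ t : Fin (d - 1) → Fin n, headSection f γ (t ∘ Fin.rev) ^ 2 =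
      ∑ t, headSection f γ t ^ 2 :=
    Fintype.sum_bijective (· ∘ Fin.rev)
      (Function.Involutive.bijective fun t => by ext; simp) _ _ fun _ => rfl
  have hstar : ∑ t, ∑ γ, ∑ s, starContraction n d d 1 f f t γ s ^ 2 =
      ∑ γ, (∑ i, headSection f γ i ^ 2) ^ 2 := by
    rw [Finset.sum_comm]
    refine Finset.sum_congr rfl fun γ _ => ?_
    simp only [starContraction_one_eq hf, mul_pow]
    rw [← Finset.sum_mul_sum, hrev, sq]
  let e : Fin n → (Fin (d - (d - 1)) → Fin n) × (Fin (d - (d - 1)) → Fin n) :=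
    fun γ => (fun _ => γ, fun _ => γ)
  have he : e.Injective := fun γ γ' h => congrFun (congrArg Prod.fst h) ⟨0, by omega⟩
  unfold starNorm contrNorm
  gcongr
  rw [hstar, ← Fintype.sum_prod_type']
  refine le_of_eq_of_le ?_ (Fintype.sum_comp_le_sum_of_injective he
    (F := fun y => contraction n d d (d - 1) f f y.1 y.2 ^ 2) fun _ => sq_nonneg _)
  simp only [e, contraction_pred_self_diag hf]

end MirrorSymmetric

theorem stmt10_general (n d : ℕ) (hd : 2 ≤ d)
    (f : (Fin d → Fin n) → ℝ)
    (hmirror : ∀ i : Fin d → Fin n, f (i ∘ Fin.rev) = f i) :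
    (∀ q : ℕ, 1 ≤ q → q ≤ d - 1 →
      starNorm n d d (q + 1) f f ≤ contrNorm n d d q f f) ∧
    starNorm n d d 1 f f ≤ contrNorm n d d (d - 1) f f :=
  ⟨fun _ _ hq => starNorm_succ_le_contrNorm (by omega) (by omega) f f,
    starNorm_one_le_contrNorm_pred (by omega) hmirror⟩

theorem stmt10 (n d : ℕ) (hd : 2 ≤ d) (hn : 1 ≤ n)
    (f : (Fin d → Fin n) → ℝ)
    (hmirror : ∀ i : Fin d → Fin n, f (i ∘ Fin.rev) = f i)
    (hdiag : ∀ i : Fin d → Fin n, ¬ Function.Injective i → f i = 0)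
    (hnorm : ∑ i : Fin d → Fin n, f i ^ 2 = 1) :
    (∀ q : ℕ, 1 ≤ q → q ≤ d - 1 →
      starNorm n d d (q + 1) f f ≤ contrNorm n d d q f f) ∧
    starNorm n d d 1 f f ≤ contrNorm n d d (d - 1) f f :=
  stmt10_general n d hd f hmirror
end
end

section
/- Let d ≥ 2, let h₁,…,h_d ≥ 1 be integers with h_i = h_{d−i+1} for 1 ≤ i ≤ ⌊d/2⌋, and set m = h₁+⋯+h_d. Let f : {1,…,n}^d → ℝ be an admissible kernel (mirror symmetric, vanishing on diagonals, with ∑ f² = 1). Partition {1,…,m} into consecutive blocks B₁,…,B_d with |B_l| = h_l and define the lifted kernel k : {1,…,n}^m → ℝ by: k(j₁,…,j_m) = f(i₁,…,i_d) if for every l = 1,…,d the coordinates of (j₁,…,j_m) indexed by B_l are all equal to a common value i_l, and k(j₁,…,j_m) = 0 otherwise. Then for every r = 1,…,m−1: (i) if r = h₁+⋯+h_q for some 1 ≤ q ≤ d−1, then ‖k ⌢_r k‖ = ‖f ⌢_q f‖; (ii) if r = h₁+⋯+h_{q−1} + t for some 1 ≤ q ≤ d and 1 ≤ t ≤ h_q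 − 1, then ‖k ⌢_r k‖ = ‖f ⋆_q^{q−1} f‖. -/
open MeasureTheory ProbabilityTheory Filter
open scoped BigOperators NNReal ENNReal Topology

noncomputable section

/-- The lifted kernel: `k j = f g` if `j` is constant on the blocks (i.e. factors through
the block map `B` as `j = g ∘ B`), and `0` otherwise. -/
def lifted (n d m : ℕ) (B : Fin m → Fin d) (f : (Fin d → Fin n) → ℝ)
    (j : Fin m → Fin n) : ℝ :=
  if hg : ∃ g : Fin d → Fin n, j = g ∘ B then f (Classical.choose hg) else 0

/-!
The lifted kernel `k = lifted n d m B f` vanishes off the tuples `g ∘ B` that are constant on the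
blocks, and `k (g ∘ B) = f g`. Since `h` is a palindrome, `B` commutes with `Fin.rev`, so in
`k ⌢_r k` the `r` contracted positions meet the same blocks, read backwards, in both factors. Each
of the three sums (over the outer variables of either factor and over the contracted variables)
then only sees block-constant tuples and may be reindexed by tuples indexed by blocks.

If `r` is a block boundary, this turns `k ⌢_r k` into `f ⌢_q f` term by term. Otherwise `r` cuts
one block of the first factor (and, mirrored, one block of the second) into an outer and a
contracted part. The contracted variables carry a single value on the cut block, which must agree
with the value of the outer variables of both factors on it: this common value is the repeated
variable `γ` of `f ⋆_q^{q-1} f`, and pairs of outer tuples on which the two values differ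
contribute nothing.
-/
open Function

theorem exists_comp_eq_of_factorsThrough {α β X : Type*} {σ : α → β} (hσ : Surjective σ)
    {t : α → X} (ht : FactorsThrough t σ) : ∃ u, u ∘ σ = t :=
  ⟨t ∘ surjInv hσ, funext fun a => ht (surjInv_eq hσ (σ a))⟩

theorem sum_comp_eq_sum_of_factorsThrough {α β X M : Type*} [Fintype α] [DecidableEq α]
    [Fintype β] [DecidableEq β] [Fintype X] [AddCommMonoid M] {σ : α → β} (hσ : Surjective σ)
    (F : (α → X) → M) (hF : ∀ t, F t ≠ 0 → FactorsThrough t σ) :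
    ∑ u : β → X, F (u ∘ σ) = ∑ t, F t := by
  refine Fintype.sum_of_injective _ hσ.injective_comp_right _ _ (fun t ht => ?_) fun _ => rfl
  by_contra hFt
  exact ht (exists_comp_eq_of_factorsThrough hσ (hF t hFt))

theorem sum_snoc_eq_sum {X M : Type*} [Fintype X] [AddCommMonoid M] {c : ℕ}
    (G : (Fin (c + 1) → X) → M) : ∑ p : X × (Fin c → X), G (Fin.snoc p.2 p.1) = ∑ u, G u :=
  Fintype.sum_equiv (Fin.snocEquiv fun _ => X) _ _ fun _ => rfl

theorem sum_cons_eq_sum {X M : Type*} [Fintype X] [AddCommMonoid M] {c : ℕ}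
    (G : (Fin (c + 1) → X) → M) : ∑ p : X × (Fin c → X), G (Fin.cons p.1 p.2) = ∑ u, G u :=
  Fintype.sum_equiv (Fin.consEquiv fun _ => X) _ _ fun _ => rfl

theorem Fin.snoc_mk {X : Type*} {c : ℕ} (t : Fin c → X) (γ : X) (v : ℕ) (hv : v < c + 1) :
    Fin.snoc (α := fun _ => X) t γ ⟨v, hv⟩ = if h : v < c then t ⟨v, h⟩ else γ := by
  simp [Fin.snoc, Fin.castLT]

theorem Fin.cons_mk {X : Type*} {c : ℕ} (γ : X) (t : Fin c → X) (v : ℕ) (hv : v < c + 1) :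
    Fin.cons (α := fun _ => X) γ t ⟨v, hv⟩ = if h : v = 0 then γ else t ⟨v - 1, by omega⟩ := by
  cases v with
  | zero => rfl
  | succ v => exact Fin.cons_succ (α := fun _ => X) γ t ⟨v, by omega⟩

theorem Fin.lt_card_filter_iff_of_monotone {m : ℕ} {α : Type*} [LinearOrder α] {B : Fin m → α}
    (hB : Monotone B) (c : α) (l : Fin m) :
    B l < c ↔ (l : ℕ) < (Finset.univ.filter fun x => B x < c).card := by
  constructor
  · intro hl
    have hsub : Finset.Iic l ⊆ Finset.univ.filter fun x => B x < c := fun x hx => by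
      simpa using (hB (Finset.mem_Iic.1 hx)).trans_lt hl
    have := Finset.card_le_card hsub
    rw [Fin.card_Iic] at this
    omega
  · intro hl
    by_contra hlc
    have hsub : (Finset.univ.filter fun x => B x < c) ⊆ Finset.Iio l := fun x hx => by
      simp only [Finset.mem_filter, Finset.mem_univ, true_and] at hx
      exact Finset.mem_Iio.2 (lt_of_not_ge fun hlx => hlc ((hB hlx).trans_lt hx))
    have := Finset.card_le_card hsub
    rw [Fin.card_Iio] at this
    omega

section Kernels

variable {n : ℕ}

def contrLeft {d q : ℕ} (t : Fin (d - q) → Fin n) (i : Fin q → Fin n) : Fin d → Fin n :=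
  fun l => if hl : (l : ℕ) < d - q then t ⟨l, hl⟩ else i ⟨l - (d - q), by omega⟩

def contrRight {p q : ℕ} (i : Fin q → Fin n) (s : Fin (p - q) → Fin n) : Fin p → Fin n :=
  fun l => if hl : (l : ℕ) < q then i ⟨q - 1 - l, by omega⟩ else s ⟨l - q, by omega⟩

theorem contraction_eq_sum {d p q : ℕ} (f : (Fin d → Fin n) → ℝ) (g : (Fin p → Fin n) → ℝ)
    (t : Fin (d - q) → Fin n) (s : Fin (p - q) → Fin n) :
    contraction n d p q f g t s = ∑ i, f (contrLeft t i) * g (contrRight i s) := rfl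

def starLeft {d r : ℕ} (t : Fin (d - r) → Fin n) (γ : Fin n) (i : Fin (r - 1) → Fin n) :
    Fin d → Fin n :=
  fun l => if h1 : (l : ℕ) < d - r then t ⟨l, h1⟩
    else if h2 : (l : ℕ) = d - r then γ else i ⟨l - (d - r) - 1, by omega⟩

def starRight {p r : ℕ} (i : Fin (r - 1) → Fin n) (γ : Fin n) (s : Fin (p - r) → Fin n) :
    Fin p → Fin n :=
  fun l => if h1 : (l : ℕ) < r - 1 then i ⟨r - 1 - 1 - l, by omega⟩
    else if h2 : (l : ℕ) = r - 1 then γ else s ⟨l - r, by omega⟩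

theorem starContraction_eq_sum {d p r : ℕ} (f : (Fin d → Fin n) → ℝ) (g : (Fin p → Fin n) → ℝ)
    (t : Fin (d - r) → Fin n) (γ : Fin n) (s : Fin (p - r) → Fin n) :
    starContraction n d p r f g t γ s = ∑ i, f (starLeft t γ i) * g (starRight i γ s) := rfl

theorem exists_ne_zero_of_contraction_ne_zero {d p q : ℕ} {f : (Fin d → Fin n) → ℝ}
    {g : (Fin p → Fin n) → ℝ} {t : Fin (d - q) → Fin n} {s : Fin (p - q) → Fin n}
    (h : contraction n d p q f g t s ≠ 0) :
    ∃ i, f (contrLeft t i) ≠ 0 ∧ g (contrRight i s) ≠ 0 := by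
  obtain ⟨i, -, hi⟩ := Finset.exists_ne_zero_of_sum_ne_zero h
  exact ⟨i, left_ne_zero_of_mul hi, right_ne_zero_of_mul hi⟩

theorem sum_sq_contraction_eq_sum_comp {m p r : ℕ} {α β : Type*} [Fintype α] [DecidableEq α]
    [Fintype β] [DecidableEq β] {f : (Fin m → Fin n) → ℝ} {g : (Fin p → Fin n) → ℝ}
    {σ : Fin (m - r) → α} {τ : Fin (p - r) → β} (hσ : Surjective σ) (hτ : Surjective τ)
    (hf : ∀ t i, f (contrLeft t i) ≠ 0 → FactorsThrough t σ)
    (hg : ∀ i s, g (contrRight i s) ≠ 0 → FactorsThrough s τ) :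
    ∑ t, ∑ s, contraction n m p r f g t s ^ 2 =
      ∑ u : α → Fin n, ∑ v : β → Fin n, contraction n m p r f g (u ∘ σ) (v ∘ τ) ^ 2 := by
  rw [← sum_comp_eq_sum_of_factorsThrough hσ]
  · refine Finset.sum_congr rfl fun u _ =>
      (sum_comp_eq_sum_of_factorsThrough hτ _ fun s hs => ?_).symm
    obtain ⟨i, -, hi⟩ := exists_ne_zero_of_contraction_ne_zero (pow_ne_zero_iff two_ne_zero |>.1 hs)
    exact hg i s hi
  · intro t ht
    obtain ⟨s, -, hs⟩ := Finset.exists_ne_zero_of_sum_ne_zero ht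
    obtain ⟨i, hi, -⟩ := exists_ne_zero_of_contraction_ne_zero (pow_ne_zero_iff two_ne_zero |>.1 hs)
    exact hf t i hi

variable {d m : ℕ} {B : Fin m → Fin d} {f : (Fin d → Fin n) → ℝ}

theorem lifted_comp (hB : Surjective B) (g : Fin d → Fin n) : lifted n d m B f (g ∘ B) = f g := by
  have hg : ∃ g' : Fin d → Fin n, g ∘ B = g' ∘ B := ⟨g, rfl⟩
  rw [lifted, dif_pos hg, hB.injective_comp_right (Classical.choose_spec hg).symm]

theorem factorsThrough_of_lifted_ne_zero {j : Fin m → Fin n} (h : lifted n d m B f j ≠ 0) :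
    FactorsThrough j B := by
  by_contra hj
  refine h (dif_neg ?_)
  rintro ⟨g, rfl⟩
  exact hj fun a b hab => congrArg g hab

end Kernels

section BlockMaps

variable {n m d a b : ℕ} (B : Fin m → Fin d)

def blockInit (ha : a ≤ m) (hb : ∀ l : Fin m, (l : ℕ) < a → (B l : ℕ) < b) : Fin a → Fin b :=
  fun x => ⟨B (Fin.castLE ha x), hb _ x.2⟩

/-- `B` on the last `a` positions, which it sends to the last `b` blocks, renumbered from `0`. -/
def blockTail (ha : a ≤ m) (hb : ∀ l : Fin m, m - a ≤ (l : ℕ) → d - b ≤ (B l : ℕ)) :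
    Fin a → Fin b :=
  fun x => ⟨B ⟨x + (m - a), by omega⟩ - (d - b), by
    have := hb ⟨x + (m - a), by omega⟩ (by simp); have := (B ⟨x + (m - a), by omega⟩).2; omega⟩

variable {B}

theorem blockInit_surjective (ha : a ≤ m) (hb : ∀ l : Fin m, (l : ℕ) < a → (B l : ℕ) < b)
    (hcover : ∀ p : Fin b, ∃ l : Fin m, (l : ℕ) < a ∧ (B l : ℕ) = p) :
    Surjective (blockInit B ha hb) := fun p => by
  obtain ⟨l, hl, hBl⟩ := hcover p
  exact ⟨⟨l, hl⟩, Fin.ext (by simp [blockInit, hBl])⟩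

theorem blockTail_surjective (ha : a ≤ m)
    (hb : ∀ l : Fin m, m - a ≤ (l : ℕ) → d - b ≤ (B l : ℕ))
    (hcover : ∀ p : Fin b, ∃ l : Fin m, m - a ≤ (l : ℕ) ∧ (B l : ℕ) = p + (d - b)) :
    Surjective (blockTail B ha hb) := fun p => by
  obtain ⟨l, hl, hBl⟩ := hcover p
  have hpos : (⟨l - (m - a) + (m - a), by omega⟩ : Fin m) = l := Fin.ext (by simp; omega)
  exact ⟨⟨l - (m - a), by omega⟩, Fin.ext (by simp [blockTail, hpos, hBl])⟩

theorem blockTail_surjective_of_map_rev (hrev : ∀ l, B l.rev = (B l).rev) (hbd : b ≤ d)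
    (ha : a ≤ m) (hb : ∀ l : Fin m, m - a ≤ (l : ℕ) → d - b ≤ (B l : ℕ))
    (hcover : ∀ p : Fin b, ∃ l : Fin m, (l : ℕ) < a ∧ (B l : ℕ) = p) :
    Surjective (blockTail B ha hb) :=
  blockTail_surjective ha hb fun p => by
    obtain ⟨l, hl, hBl⟩ := hcover p.rev
    refine ⟨l.rev, by simp; omega, ?_⟩
    simp only [hrev, Fin.val_rev, hBl]
    omega

variable {r : ℕ} {t : Fin (m - r) → Fin n} {i : Fin r → Fin n} {s : Fin (m - r) → Fin n}

theorem factorsThrough_blockInit_of_contrLeft (hG : FactorsThrough (contrLeft t i) B)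
    (hb : ∀ l : Fin m, (l : ℕ) < m - r → (B l : ℕ) < b) :
    FactorsThrough t (blockInit B (Nat.sub_le m r) hb) := fun x y hxy => by
  have := hG (a := Fin.castLE (Nat.sub_le m r) x) (b := Fin.castLE (Nat.sub_le m r) y)
    (Fin.ext (by have := Fin.val_eq_of_eq hxy; exact this))
  simpa [contrLeft] using this

theorem factorsThrough_blockTail_of_contrLeft (hG : FactorsThrough (contrLeft t i) B)
    (hrm : r ≤ m) (hb : ∀ l : Fin m, m - r ≤ (l : ℕ) → d - b ≤ (B l : ℕ)) :
    FactorsThrough i (blockTail B hrm hb) := fun x y hxy => by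
  have hx := hb ⟨x + (m - r), by omega⟩ (by simp)
  have hy := hb ⟨y + (m - r), by omega⟩ (by simp)
  have := hG (a := ⟨x + (m - r), by omega⟩) (b := ⟨y + (m - r), by omega⟩)
    (Fin.ext (by have := congrArg Fin.val hxy; simp [blockTail] at this; omega))
  simpa [contrLeft] using this

theorem factorsThrough_blockTail_of_contrRight (hG : FactorsThrough (contrRight i s) B)
    (hrm : r ≤ m) (hb : ∀ l : Fin m, m - (m - r) ≤ (l : ℕ) → d - b ≤ (B l : ℕ)) :
    FactorsThrough s (blockTail B (Nat.sub_le m r) hb) := fun x y hxy => by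
  have hx := hb ⟨x + (m - (m - r)), by omega⟩ (by simp)
  have hy := hb ⟨y + (m - (m - r)), by omega⟩ (by simp)
  have := hG (a := ⟨x + (m - (m - r)), by omega⟩) (b := ⟨y + (m - (m - r)), by omega⟩)
    (Fin.ext (by have := congrArg Fin.val hxy; simp [blockTail] at this; omega))
  simp only [contrRight, show ¬ x + (m - (m - r)) < r by omega,
    show ¬ y + (m - (m - r)) < r by omega, dif_neg, not_false_eq_true] at this
  convert this using 2 <;> ext <;> simp <;> omega

end BlockMaps

section BoundaryCase

variable {n m d q r : ℕ} {B : Fin m → Fin d}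
  (hT : ∀ l : Fin m, (l : ℕ) < m - r → (B l : ℕ) < d - q)
  (hI : ∀ l : Fin m, m - r ≤ (l : ℕ) → d - q ≤ (B l : ℕ))
  (hS : ∀ l : Fin m, m - (m - r) ≤ (l : ℕ) → d - (d - q) ≤ (B l : ℕ))

theorem contrLeft_comp_blockMaps (hrm : r ≤ m) (u : Fin (d - q) → Fin n) (w : Fin q → Fin n) :
    contrLeft (u ∘ blockInit B (Nat.sub_le m r) hT) (w ∘ blockTail B hrm hI) =
      contrLeft u w ∘ B := by
  funext l
  by_cases hl : (l : ℕ) < m - r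
  · simp [contrLeft, blockInit, hl, hT l hl]
  · have hpos : (⟨l - (m - r) + (m - r), by omega⟩ : Fin m) = l := Fin.ext (by simp; omega)
    have hBl := hI l (by omega)
    simp [contrLeft, blockTail, hl, hpos, Nat.not_lt.mpr hBl]

theorem contrRight_comp_blockMaps (hrev : ∀ l, B l.rev = (B l).rev) (hqd : q ≤ d) (hrm : r ≤ m)
    (w : Fin q → Fin n) (v : Fin (d - q) → Fin n) :
    contrRight (w ∘ blockTail B hrm hI) (v ∘ blockTail B (Nat.sub_le m r) hS) =
      contrRight w v ∘ B := by
  funext l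
  by_cases hl : (l : ℕ) < r
  · have hpos : (⟨r - 1 - l + (m - r), by omega⟩ : Fin m) = l.rev := Fin.ext (by simp; omega)
    have hBl := hI l.rev (by simp; omega)
    rw [hrev] at hBl
    simp only [Fin.val_rev] at hBl
    have hBd := (B l).2
    simp only [contrRight, blockTail, comp_apply, hl, dif_pos, hpos, hrev, Fin.val_rev]
    rw [dif_pos (by omega)]
    exact congrArg w (Fin.ext (by simp; omega))
  · have hpos : (⟨l - r + (m - (m - r)), by omega⟩ : Fin m) = l := Fin.ext (by simp; omega)
    have hBl := hS l (by omega)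
    simp only [contrRight, blockTail, comp_apply, hl, dif_neg, not_false_eq_true, hpos]
    rw [dif_neg (by omega)]
    exact congrArg v (Fin.ext (by simp; omega))

theorem contraction_lifted_comp_blockMaps (hB : Surjective B) (hrev : ∀ l, B l.rev = (B l).rev)
    (hqd : q ≤ d) (hrm : r ≤ m) (hσ : Surjective (blockTail B hrm hI))
    (f : (Fin d → Fin n) → ℝ) (u : Fin (d - q) → Fin n) (v : Fin (d - q) → Fin n) :
    contraction n m m r (lifted n d m B f) (lifted n d m B f)
        (u ∘ blockInit B (Nat.sub_le m r) hT) (v ∘ blockTail B (Nat.sub_le m r) hS) =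
      contraction n d d q f f u v := by
  rw [contraction_eq_sum, contraction_eq_sum, ← sum_comp_eq_sum_of_factorsThrough hσ]
  · refine Finset.sum_congr rfl fun w _ => ?_
    rw [contrLeft_comp_blockMaps, contrRight_comp_blockMaps hI hS hrev hqd, lifted_comp hB,
      lifted_comp hB]
  · intro i hi
    exact factorsThrough_blockTail_of_contrLeft
      (factorsThrough_of_lifted_ne_zero (left_ne_zero_of_mul hi)) hrm hI

end BoundaryCase

theorem contrNorm_lifted_eq_contrNorm {n m d q r : ℕ} {B : Fin m → Fin d} (hB : Surjective B)
    (hrev : ∀ l, B l.rev = (B l).rev) (hqd : q ≤ d) (hrm : r ≤ m)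
    (hsplit : ∀ l : Fin m, (B l : ℕ) < d - q ↔ (l : ℕ) < m - r) (f : (Fin d → Fin n) → ℝ) :
    contrNorm n m m r (lifted n d m B f) (lifted n d m B f) = contrNorm n d d q f f := by
  have hT : ∀ l : Fin m, (l : ℕ) < m - r → (B l : ℕ) < d - q := fun l => (hsplit l).2
  have hI : ∀ l : Fin m, m - r ≤ (l : ℕ) → d - q ≤ (B l : ℕ) := fun l => by
    have := hsplit l; omega
  have hS : ∀ l : Fin m, m - (m - r) ≤ (l : ℕ) → d - (d - q) ≤ (B l : ℕ) := fun l hl => by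
    have := hsplit l.rev
    rw [hrev, Fin.val_rev, Fin.val_rev] at this
    omega
  have hcoverT : ∀ p : Fin (d - q), ∃ l : Fin m, (l : ℕ) < m - r ∧ (B l : ℕ) = p := fun p => by
    obtain ⟨l, hl⟩ := hB ⟨p, by omega⟩
    exact ⟨l, (hsplit l).1 (by simp [hl]), by simp [hl]⟩
  have hσI := blockTail_surjective hrm hI fun p => by
    obtain ⟨l, hl⟩ := hB ⟨p + (d - q), by omega⟩
    exact ⟨l, by have := hsplit l; simp [hl] at this; omega, by simp [hl]⟩
  unfold contrNorm
  congr 1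
  rw [sum_sq_contraction_eq_sum_comp (blockInit_surjective _ hT hcoverT)
    (blockTail_surjective_of_map_rev hrev (Nat.sub_le d q) _ hS hcoverT)
    (fun t i hi => factorsThrough_blockInit_of_contrLeft (factorsThrough_of_lifted_ne_zero hi) hT)
    (fun i s hs => factorsThrough_blockTail_of_contrRight (factorsThrough_of_lifted_ne_zero hs)
      hrm hS)]
  simp only [contraction_lifted_comp_blockMaps hT hI hS hB hrev hqd hrm hσI]

section StraddleCase

variable {n m d q r : ℕ} {B : Fin m → Fin d}
  (hT : ∀ l : Fin m, (l : ℕ) < m - r → (B l : ℕ) < d - (q + 1) + 1)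
  (hI : ∀ l : Fin m, m - r ≤ (l : ℕ) → d - (q + 1 - 1 + 1) ≤ (B l : ℕ))
  (hS : ∀ l : Fin m, m - (m - r) ≤ (l : ℕ) → d - (d - (q + 1) + 1) ≤ (B l : ℕ))

theorem contrLeft_snoc_comp_eq_starLeft (hrm : r ≤ m) (t : Fin (d - (q + 1)) → Fin n) (γ : Fin n)
    (w : Fin (q + 1 - 1) → Fin n) :
    contrLeft (Fin.snoc t γ ∘ blockInit B (Nat.sub_le m r) hT)
        (Fin.cons γ w ∘ blockTail B hrm hI) = starLeft t γ w ∘ B := by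
  funext l
  by_cases hl : (l : ℕ) < m - r
  · have hBl := hT l hl
    simp only [contrLeft, starLeft, blockInit, comp_apply, hl, dif_pos, Fin.snoc_mk,
      Fin.castLE_mk, Fin.eta]
    split_ifs <;> omega
  · have hpos : (⟨l - (m - r) + (m - r), by omega⟩ : Fin m) = l := Fin.ext (by simp; omega)
    have hBl := hI l (by omega)
    simp only [contrLeft, starLeft, blockTail, comp_apply, hl, dif_neg, not_false_eq_true, hpos,
      Fin.cons_mk]
    split_ifs <;> first | omega | rfl

theorem contrRight_cons_comp_eq_starRight (hrev : ∀ l, B l.rev = (B l).rev) (hqd : q + 1 ≤ d)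
    (hrm : r ≤ m) (w : Fin (q + 1 - 1) → Fin n) (γ : Fin n) (s : Fin (d - (q + 1)) → Fin n) :
    contrRight (Fin.cons γ w ∘ blockTail B hrm hI)
        (Fin.cons γ s ∘ blockTail B (Nat.sub_le m r) hS) = starRight w γ s ∘ B := by
  funext l
  by_cases hl : (l : ℕ) < r
  · have hpos : (⟨r - 1 - l + (m - r), by omega⟩ : Fin m) = l.rev := Fin.ext (by simp; omega)
    have hBl := hI l.rev (by simp; omega)
    rw [hrev] at hBl
    simp only [Fin.val_rev] at hBl
    have hBd := (B l).2
    simp only [contrRight, starRight, blockTail, comp_apply, hl, dif_pos, hpos, hrev, Fin.val_rev,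
      Fin.cons_mk]
    split_ifs <;> first | omega | (congr 1; ext; simp only; omega)
  · have hpos : (⟨l - r + (m - (m - r)), by omega⟩ : Fin m) = l := Fin.ext (by simp; omega)
    have hBl := hS l (by omega)
    simp only [contrRight, starRight, blockTail, comp_apply, hl, dif_neg, not_false_eq_true, hpos,
      Fin.cons_mk]
    split_ifs <;> first | omega | (congr 1; ext; simp only; omega)

theorem last_eq_zero_of_factorsThrough_contrLeft (hrm : r ≤ m) {a₀ b₀ : Fin m}
    (ha₀ : (a₀ : ℕ) < m - r) (hb₀ : m - r ≤ (b₀ : ℕ)) (hBa₀ : (B a₀ : ℕ) = d - (q + 1))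
    (hBb₀ : (B b₀ : ℕ) = d - (q + 1)) {u : Fin (d - (q + 1) + 1) → Fin n}
    {v : Fin (q + 1 - 1 + 1) → Fin n}
    (hG : FactorsThrough (contrLeft (u ∘ blockInit B (Nat.sub_le m r) hT)
      (v ∘ blockTail B hrm hI)) B) :
    u (Fin.last _) = v 0 := by
  have h := hG (a := a₀) (b := b₀) (Fin.ext (by rw [hBa₀, hBb₀]))
  simp only [contrLeft, comp_apply, dif_pos ha₀, dif_neg (Nat.not_lt.2 hb₀)] at h
  have hb : (⟨b₀ - (m - r) + (m - r), by omega⟩ : Fin m) = b₀ := Fin.ext (by simp; omega)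
  convert h using 2 <;> ext <;> simp [blockInit, blockTail, hb, hBa₀, hBb₀]

theorem zero_eq_zero_of_factorsThrough_contrRight (hqd : q + 1 ≤ d) (hrm : r ≤ m)
    (hrev : ∀ l, B l.rev = (B l).rev) {a₀ b₀ : Fin m}
    (ha₀ : (a₀ : ℕ) < m - r) (hb₀ : m - r ≤ (b₀ : ℕ)) (hBa₀ : (B a₀ : ℕ) = d - (q + 1))
    (hBb₀ : (B b₀ : ℕ) = d - (q + 1)) {v : Fin (q + 1 - 1 + 1) → Fin n}
    {w : Fin (d - (q + 1) + 1) → Fin n}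
    (hG : FactorsThrough (contrRight (v ∘ blockTail B hrm hI)
      (w ∘ blockTail B (Nat.sub_le m r) hS)) B) :
    v 0 = w 0 := by
  have h := hG (a := b₀.rev) (b := a₀.rev) (Fin.ext (by simp [hrev, hBa₀, hBb₀]))
  simp only [contrRight, comp_apply, Fin.val_rev, dif_pos (show m - (b₀ + 1) < r by omega),
    dif_neg (show ¬ m - (a₀ + 1) < r by omega)] at h
  have hb : (⟨r - 1 - (m - (b₀ + 1)) + (m - r), by omega⟩ : Fin m) = b₀ :=
    Fin.ext (by simp; omega)
  have ha : (⟨m - (a₀ + 1) - r + (m - (m - r)), by omega⟩ : Fin m) = a₀.rev :=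
    Fin.ext (by simp; omega)
  convert h using 2 <;> ext <;> simp [blockTail, ha, hb, hrev, hBa₀, hBb₀]

theorem contraction_lifted_comp_snoc_cons (hB : Surjective B)
    (hrev : ∀ l, B l.rev = (B l).rev) (hqd : q + 1 ≤ d) (hrm : r ≤ m)
    (hσ : Surjective (blockTail B hrm hI)) {a₀ b₀ : Fin m}
    (ha₀ : (a₀ : ℕ) < m - r) (hb₀ : m - r ≤ (b₀ : ℕ)) (hBa₀ : (B a₀ : ℕ) = d - (q + 1))
    (hBb₀ : (B b₀ : ℕ) = d - (q + 1)) (f : (Fin d → Fin n) → ℝ)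
    (t : Fin (d - (q + 1)) → Fin n) (γ γ' : Fin n) (s : Fin (d - (q + 1)) → Fin n) :
    contraction n m m r (lifted n d m B f) (lifted n d m B f)
        (Fin.snoc t γ ∘ blockInit B (Nat.sub_le m r) hT)
        (Fin.cons γ' s ∘ blockTail B (Nat.sub_le m r) hS) =
      if γ = γ' then starContraction n d d (q + 1) f f t γ s else 0 := by
  rw [contraction_eq_sum, ← sum_comp_eq_sum_of_factorsThrough hσ, ← sum_cons_eq_sum,
    Fintype.sum_prod_type, Finset.sum_eq_single γ]
  · split_ifs with hγ
    · subst hγ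
      rw [starContraction_eq_sum]
      refine Finset.sum_congr rfl fun w _ => ?_
      rw [contrLeft_snoc_comp_eq_starLeft, contrRight_cons_comp_eq_starRight hI hS hrev hqd,
        lifted_comp hB, lifted_comp hB]
    · refine Finset.sum_eq_zero fun w _ => mul_eq_zero_of_right _ ?_
      by_contra h
      refine hγ ?_
      simpa using zero_eq_zero_of_factorsThrough_contrRight hI hS hqd hrm hrev ha₀ hb₀ hBa₀ hBb₀
        (factorsThrough_of_lifted_ne_zero h)
  · intro γ₂ _ hγ₂
    refine Finset.sum_eq_zero fun w _ => mul_eq_zero_of_left ?_ _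
    by_contra h
    refine hγ₂ ?_
    simpa using (last_eq_zero_of_factorsThrough_contrLeft hT hI hrm ha₀ hb₀ hBa₀ hBb₀
      (factorsThrough_of_lifted_ne_zero h)).symm
  · exact fun h => absurd (Finset.mem_univ γ) h
  · intro i hi
    exact factorsThrough_blockTail_of_contrLeft
      (factorsThrough_of_lifted_ne_zero (left_ne_zero_of_mul hi)) hrm hI

end StraddleCase

theorem contrNorm_lifted_eq_starNorm {n m d q r : ℕ} {B : Fin m → Fin d} (hB : Surjective B)
    (hrev : ∀ l, B l.rev = (B l).rev) (hqd : q + 1 ≤ d) (hrm : r ≤ m)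
    (hlt : ∀ l : Fin m, (B l : ℕ) < d - (q + 1) → (l : ℕ) < m - r)
    (hle : ∀ l : Fin m, (l : ℕ) < m - r → (B l : ℕ) ≤ d - (q + 1)) {a₀ b₀ : Fin m}
    (ha₀ : (a₀ : ℕ) < m - r) (hb₀ : m - r ≤ (b₀ : ℕ)) (hBa₀ : (B a₀ : ℕ) = d - (q + 1))
    (hBb₀ : (B b₀ : ℕ) = d - (q + 1)) (f : (Fin d → Fin n) → ℝ) :
    contrNorm n m m r (lifted n d m B f) (lifted n d m B f) = starNorm n d d (q + 1) f f := by
  have hT : ∀ l : Fin m, (l : ℕ) < m - r → (B l : ℕ) < d - (q + 1) + 1 := fun l hl => by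
    have := hle l hl; omega
  have hI : ∀ l : Fin m, m - r ≤ (l : ℕ) → d - (q + 1 - 1 + 1) ≤ (B l : ℕ) := fun l hl => by
    have := hlt l; omega
  have hS : ∀ l : Fin m, m - (m - r) ≤ (l : ℕ) → d - (d - (q + 1) + 1) ≤ (B l : ℕ) :=
    fun l hl => by
      have := hle l.rev (by simp; omega)
      simp only [hrev, Fin.val_rev] at this
      omega
  have hcoverT : ∀ p : Fin (d - (q + 1) + 1), ∃ l : Fin m, (l : ℕ) < m - r ∧ (B l : ℕ) = p :=
    fun p => by
      by_cases hp : (p : ℕ) < d - (q + 1)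
      · obtain ⟨l, hl⟩ := hB ⟨p, by omega⟩
        exact ⟨l, hlt l (by simp [hl, hp]), by simp [hl]⟩
      · exact ⟨a₀, ha₀, by omega⟩
  have hσI := blockTail_surjective hrm hI fun p => by
    obtain hp | hp := Nat.eq_zero_or_pos (p : ℕ)
    · exact ⟨b₀, hb₀, by omega⟩
    · obtain ⟨l, hl⟩ := hB ⟨p + (d - (q + 1 - 1 + 1)), by omega⟩
      refine ⟨l, by_contra fun h => ?_, by simp [hl]⟩
      have := hle l (by omega)
      simp only [hl, Fin.val_mk] at this
      omega
  unfold contrNorm starNorm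
  congr 1
  rw [sum_sq_contraction_eq_sum_comp (blockInit_surjective _ hT hcoverT)
    (blockTail_surjective_of_map_rev hrev (by omega) _ hS hcoverT)
    (fun t i hi => factorsThrough_blockInit_of_contrLeft (factorsThrough_of_lifted_ne_zero hi) hT)
    (fun i s hs => factorsThrough_blockTail_of_contrRight (factorsThrough_of_lifted_ne_zero hs)
      hrm hS), ← sum_snoc_eq_sum, Fintype.sum_prod_type, Finset.sum_comm]
  refine Finset.sum_congr rfl fun t _ => Finset.sum_congr rfl fun γ _ => ?_
  rw [← sum_cons_eq_sum, Fintype.sum_prod_type]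
  simp [contraction_lifted_comp_snoc_cons hT hI hS hB hrev hqd hrm hσI ha₀ hb₀ hBa₀ hBb₀]

section Blocks

variable {d m : ℕ} {h : Fin d → ℕ} {B : Fin m → Fin d}

def blockStart (h : Fin d → ℕ) (N : ℕ) : ℕ :=
  ∑ l ∈ Finset.univ.filter (fun l : Fin d => (l : ℕ) < N), h l

theorem blockStart_of_le {N : ℕ} (hN : d ≤ N) : blockStart h N = ∑ l, h l := by
  rw [blockStart, Finset.filter_true_of_mem fun l _ => l.2.trans_le hN]

theorem blockStart_succ {p : ℕ} (hp : p < d) :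
    blockStart h (p + 1) = blockStart h p + h ⟨p, hp⟩ := by
  have : Finset.univ.filter (fun l : Fin d => (l : ℕ) < p + 1) =
      insert ⟨p, hp⟩ (Finset.univ.filter fun l : Fin d => (l : ℕ) < p) := by
    ext l
    simp only [Finset.mem_filter, Finset.mem_univ, true_and, Finset.mem_insert, Fin.ext_iff]
    omega
  rw [blockStart, this, Finset.sum_insert (by simp), add_comm, blockStart]

theorem blockStart_add_blockStart (hpal : ∀ l, h l = h l.rev) {N N' : ℕ} (hN : N + N' = d) :
    blockStart h N + blockStart h N' = ∑ l, h l := by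
  have hrev : blockStart h N =
      ∑ l ∈ Finset.univ.filter (fun l : Fin d => ¬ (l : ℕ) < N'), h l := by
    refine Finset.sum_nbij' Fin.rev Fin.rev (fun l hl => ?_) (fun l hl => ?_)
      (fun l _ => Fin.rev_rev l) (fun l _ => Fin.rev_rev l) fun l _ => hpal l
    all_goals simp only [Finset.mem_filter, Finset.mem_univ, true_and, Fin.val_rev] at hl ⊢; omega
  rw [hrev, blockStart, add_comm, Finset.sum_filter_add_sum_filter_not]

theorem val_lt_blockStart_iff (hBmono : Monotone B)
    (hBcard : ∀ p : Fin d, (Finset.univ.filter fun l => B l = p).card = h p) (N : ℕ)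
    (l : Fin m) : (B l : ℕ) < N ↔ (l : ℕ) < blockStart h N := by
  have hmono : Monotone fun l => (B l : ℕ) := fun a b hab => hBmono hab
  rw [Fin.lt_card_filter_iff_of_monotone hmono N l, blockStart,
    Finset.card_eq_sum_card_fiberwise (f := B)
      (t := Finset.univ.filter fun p : Fin d => (p : ℕ) < N) fun x hx => by simpa using hx]
  refine Iff.of_eq (congrArg _ (Finset.sum_congr rfl fun p hp => ?_))
  rw [← hBcard p, Finset.filter_filter]
  congr 1
  ext x
  simp only [Finset.mem_filter, Finset.mem_univ, true_and] at hp ⊢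
  constructor
  · exact And.right
  · rintro rfl; exact ⟨hp, rfl⟩

theorem val_eq_of_blockStart_le (hBmono : Monotone B)
    (hBcard : ∀ p : Fin d, (Finset.univ.filter fun l => B l = p).card = h p) {p : ℕ} {l : Fin m}
    (h₁ : blockStart h p ≤ l) (h₂ : (l : ℕ) < blockStart h (p + 1)) : (B l : ℕ) = p := by
  have := val_lt_blockStart_iff hBmono hBcard p l
  have := val_lt_blockStart_iff hBmono hBcard (p + 1) l
  omega

theorem surjective_of_card_fiber_pos (hpos : ∀ p, 1 ≤ h p)
    (hBcard : ∀ p : Fin d, (Finset.univ.filter fun l => B l = p).card = h p) : Surjective B :=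
  fun p => by
    obtain ⟨l, hl⟩ := Finset.card_pos.1 ((hBcard p).symm ▸ hpos p : 0 < _)
    exact ⟨l, (Finset.mem_filter.1 hl).2⟩

theorem map_rev_of_palindromic (hBmono : Monotone B)
    (hBcard : ∀ p : Fin d, (Finset.univ.filter fun l => B l = p).card = h p)
    (hpal : ∀ l, h l = h l.rev) (hm : m = ∑ l, h l) (l : Fin m) : B l.rev = (B l).rev := by
  refine Fin.ext (eq_of_forall_gt_iff fun N => ?_)
  rw [val_lt_blockStart_iff hBmono hBcard, Fin.val_rev, Fin.val_rev]
  have hBl := (B l).2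
  rcases le_or_gt N d with hN | hN
  · have := blockStart_add_blockStart hpal (N := N) (N' := d - N) (by omega)
    have := val_lt_blockStart_iff hBmono hBcard (d - N) l
    omega
  · have := blockStart_of_le (h := h) hN.le
    omega

end Blocks

theorem stmt11_general (n d : ℕ)
    (h : Fin d → ℕ) (hpos : ∀ l, 1 ≤ h l)
    (hpal : ∀ l : Fin d, h l = h (Fin.rev l))
    (m : ℕ) (hm : m = ∑ l, h l)
    (f : (Fin d → Fin n) → ℝ)
    -- `B` is the map sending a position in `{1,…,m}` to its (consecutive) block in `{1,…,d}`,
    -- the `l`-th block having `h l` elements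
    (B : Fin m → Fin d) (hBmono : Monotone B)
    (hBcard : ∀ q : Fin d, (Finset.univ.filter fun l => B l = q).card = h q) :
    ∀ r : ℕ, 1 ≤ r → r ≤ m - 1 →
      (∀ q : ℕ, 1 ≤ q → q ≤ d - 1 →
        r = ∑ l ∈ Finset.univ.filter (fun l : Fin d => (l : ℕ) < q), h l →
        contrNorm n m m r (lifted n d m B f) (lifted n d m B f) = contrNorm n d d q f f) ∧
      (∀ q : Fin d, ∀ t : ℕ, 1 ≤ t → t ≤ h q - 1 →
        r = (∑ l ∈ Finset.univ.filter (fun l : Fin d => (l : ℕ) < (q : ℕ)), h l) + t →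
        contrNorm n m m r (lifted n d m B f) (lifted n d m B f) =
          starNorm n d d ((q : ℕ) + 1) f f) := by
  have hB := surjective_of_card_fiber_pos hpos hBcard
  have hrev := map_rev_of_palindromic hBmono hBcard hpal hm
  have hlt := val_lt_blockStart_iff hBmono hBcard
  have hsym : ∀ N N', N + N' = d → blockStart h N + blockStart h N' = m := fun N N' hN =>
    hm ▸ blockStart_add_blockStart hpal hN
  intro r _ hrm
  refine ⟨fun q _ hqd hr => ?_, fun q t ht1 ht2 hr => ?_⟩
  · change r = blockStart h q at hr
    have := hsym q (d - q) (by omega)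
    refine contrNorm_lifted_eq_contrNorm hB hrev (by omega) (by omega) (fun l => ?_) f
    rw [hlt]
    omega
  · change r = blockStart h q + t at hr
    -- the cut block is `d - (q + 1)`, the mirror image of block `q`, and has `h q` elements
    have hsq := hsym q (d - (q + 1) + 1) (by omega)
    have hsucc : blockStart h (d - (q + 1) + 1) = blockStart h (d - (q + 1)) + h q := by
      rw [hpal q]
      exact blockStart_succ (by omega)
    have hBq := fun l => val_eq_of_blockStart_le hBmono hBcard (p := d - (q + 1)) (l := l)
    exact contrNorm_lifted_eq_starNorm hB hrev q.2 (by omega)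
      (fun l _ => by have := hlt (d - (q + 1)) l; omega)
      (fun l _ => by have := hlt (d - (q + 1) + 1) l; omega)
      (a₀ := ⟨blockStart h (d - (q + 1)), by omega⟩) (b₀ := ⟨m - r, by omega⟩)
      (by simp; omega) le_rfl (hBq _ le_rfl (by simp; omega))
      (hBq _ (by simp; omega) (by simp; omega)) f

theorem stmt11 (n d : ℕ) (hd : 2 ≤ d)
    (h : Fin d → ℕ) (hpos : ∀ l, 1 ≤ h l)
    (hpal : ∀ l : Fin d, h l = h (Fin.rev l))
    (m : ℕ) (hm : m = ∑ l, h l)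
    (f : (Fin d → Fin n) → ℝ)
    (hmirror : ∀ i : Fin d → Fin n, f (i ∘ Fin.rev) = f i)
    (hdiag : ∀ i : Fin d → Fin n, ¬ Function.Injective i → f i = 0)
    (hnorm : ∑ i : Fin d → Fin n, f i ^ 2 = 1)
    -- `B` is the map sending a position in `{1,…,m}` to its (consecutive) block in `{1,…,d}`,
    -- the `l`-th block having `h l` elements
    (B : Fin m → Fin d) (hBmono : Monotone B)
    (hBcard : ∀ q : Fin d, (Finset.univ.filter fun l => B l = q).card = h q) :
    ∀ r : ℕ, 1 ≤ r → r ≤ m - 1 →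
      (∀ q : ℕ, 1 ≤ q → q ≤ d - 1 →
        r = ∑ l ∈ Finset.univ.filter (fun l : Fin d => (l : ℕ) < q), h l →
        contrNorm n m m r (lifted n d m B f) (lifted n d m B f) = contrNorm n d d q f f) ∧
      (∀ q : Fin d, ∀ t : ℕ, 1 ≤ t → t ≤ h q - 1 →
        r = (∑ l ∈ Finset.univ.filter (fun l : Fin d => (l : ℕ) < (q : ℕ)), h l) + t →
        contrNorm n m m r (lifted n d m B f) (lifted n d m B f) =
          starNorm n d d ((q : ℕ) + 1) f f) :=
  stmt11_general n d h hpos hpal m hm f B hBmono hBcard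
end
end

section
/- Let n ≥ 1 and 1 ≤ m ≤ n. Let X₀ be a real random variable with finite moments of all orders, set a_j = E[X₀^j] (with a₀ = 1), and let a_{j,k} (j = 2,…,m, k = 0,…,n+1) be real numbers (for instance joint moments a_{j,k} = E[X_j^k] of further random variables X₂,…,X_m). Define the polynomial p_{n,m}(x) = det M(x), where M(x) is the (n+1)×(n+1) matrix whose first row is (1, x, x², …, xⁿ), whose following n−m+1 rows are (a_k, a_{k+1}, …, a_{k+n}) for k = 0,1,…,n−m, and whose last m−1 rows are (a_{j,0}, a_{j,1}, …, a_{j,n}) for j = 2,…,m. Then: (a) E[X₀^k · p_{n,m}(X₀)] = 0 for every k = 0,1,…,n−m; (b) E[X₀^{n−m+1} · p_{n,m}(X₀)] = (−1)^{n−m+1}·det N, where N is the (n+1)×(n+1) matrix with rows (a_k, a_{k+1}, …, a_{k+n}) for k = 0,1,…,n−m+1 followed by the rows (a_{j,0}, …, a_{j,n}) for j = 2,…,m; in particular E[X₀^{n−m+1} · p_{n,m}(X₀)] ≠ 0 whenever det N ≠ 0. -/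
/-!
Expanding `det M(x)` along its first row shows that it depends linearly on that row
`(1, x, …, xⁿ)`. Hence, by linearity of expectation, `E[X₀ᵏ · det M(X₀)]` is the determinant of
`M` with first row replaced by `(a_k, …, a_{k+n})`. For `k ≤ n − m` this repeats row `k + 1`, so
the determinant vanishes; for `k = n − m + 1`, moving the first row down to position `n − m + 1`
turns the matrix into `N`, a cyclic permutation of the rows of sign `(-1)^(n − m + 1)`.
-/

open MeasureTheory

noncomputable section

namespace Matrix

theorem integral_det_updateRow {Ω ι : Type*} [MeasurableSpace Ω] {μ : Measure Ω} [Fintype ι]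
    [DecidableEq ι] (A : Matrix ι ι ℝ) (i : ι) {v : Ω → ι → ℝ}
    (hv : ∀ j, Integrable (fun ω => v ω j) μ) :
    ∫ ω, (A.updateRow i (v ω)).det ∂μ = (A.updateRow i fun j => ∫ ω, v ω j ∂μ).det := by
  let L : (ι → ℝ) →L[ℝ] ℝ := LinearMap.toContinuousLinearMap
    ((detRowAlternating : (ι → ℝ) [⋀^ι]→ₗ[ℝ] ℝ).toMultilinearMap.toLinearMap A i)
  have hL : ∀ w, (A.updateRow i w).det = L w := fun _ => rfl
  simp_rw [hL, L.integral_comp_comm (Integrable.of_eval hv)]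
  congr 1
  exact funext (eval_integral hv)

theorem integral_pow_mul_det_updateRow_pow {Ω ι : Type*} [MeasurableSpace Ω] {μ : Measure Ω}
    [Fintype ι] [DecidableEq ι] (A : Matrix ι ι ℝ) (i : ι) (e : ι → ℕ) {X : Ω → ℝ}
    (hX : ∀ k : ℕ, Integrable (fun ω => X ω ^ k) μ) (k : ℕ) :
    ∫ ω, X ω ^ k * (A.updateRow i fun j => X ω ^ e j).det ∂μ =
      (A.updateRow i fun j => ∫ ω, X ω ^ (k + e j) ∂μ).det := by
  simp_rw [← det_updateRow_smul, ← integral_det_updateRow A i fun j => hX (k + e j)]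
  congr! 4 with ω
  ext j
  simp [pow_add]

theorem det_submatrix_cycleRange {R : Type*} [CommRing R] {n : ℕ} (A : Matrix (Fin n) (Fin n) R)
    (κ : Fin n) : (A.submatrix κ.cycleRange id).det = (-1) ^ (κ : ℕ) * A.det := by
  rw [det_permute, Fin.sign_cycleRange]
  push_cast
  rfl

end Matrix

namespace GeneralizedOrthogonal

open Matrix

variable {n K : ℕ} (a : ℕ → ℝ) (b : ℕ → ℕ → ℝ)

/-- The matrix `M(x)` of the statement, with `K = n - m`. -/
def polyMatrix (x : ℝ) : Matrix (Fin (n + 1)) (Fin (n + 1)) ℝ :=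
  Matrix.of fun r c =>
    if (r : ℕ) = 0 then x ^ (c : ℕ)
    else if (r : ℕ) ≤ K + 1 then a ((r : ℕ) - 1 + (c : ℕ))
    else b ((r : ℕ) - K) (c : ℕ)

/-- The matrix `N` of the statement, with `K = n - m`. -/
def momentMatrix : Matrix (Fin (n + 1)) (Fin (n + 1)) ℝ :=
  Matrix.of fun r c =>
    if (r : ℕ) ≤ K + 1 then a ((r : ℕ) + (c : ℕ)) else b ((r : ℕ) - K) (c : ℕ)

theorem polyMatrix_eq_updateRow (x : ℝ) :
    polyMatrix (n := n) (K := K) a b x =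
      (polyMatrix (n := n) (K := K) a b 0).updateRow 0 fun c => x ^ (c : ℕ) := by
  ext r c
  rcases eq_or_ne r 0 with rfl | hr
  · simp [polyMatrix]
  · simp [polyMatrix, hr]

theorem polyMatrix_row_succ {k : ℕ} (hk : k + 1 < n + 1) (hkK : k ≤ K) (x : ℝ) :
    polyMatrix (n := n) (K := K) a b x ⟨k + 1, hk⟩ = fun c : Fin (n + 1) => a (k + c) := by
  ext c
  simp [polyMatrix, hkK]

theorem momentMatrix_det (hK : K + 1 < n + 1) :
    (momentMatrix (n := n) (K := K) a b).det =
      (-1) ^ (K + 1) *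
        ((polyMatrix (n := n) (K := K) a b 0).updateRow 0 fun c => a (K + 1 + c)).det := by
  set κ : Fin (n + 1) := ⟨K + 1, hK⟩
  rw [← det_submatrix_cycleRange _ κ]
  congr 1
  ext r c
  rcases lt_trichotomy r κ with h | rfl | h
  · have hr : (r : ℕ) < K + 1 := h
    have hval : ((r + 1 : Fin (n + 1)) : ℕ) = r + 1 := Fin.val_add_one_of_lt (h.trans_le κ.le_last)
    have hr0 : r + 1 ≠ 0 := Fin.ne_of_val_ne (by rw [hval]; exact Nat.succ_ne_zero _)
    simp [momentMatrix, polyMatrix, Fin.cycleRange_of_lt h, hval, hr0, hr.le, Nat.lt_succ_iff.mp hr]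
  · simp [momentMatrix, κ]
  · have hr : K + 1 < (r : ℕ) := h
    have hr0 : r ≠ 0 := Fin.pos_iff_ne_zero.mp (lt_of_le_of_lt (Fin.zero_le κ) h)
    simp [momentMatrix, polyMatrix, Fin.cycleRange_of_gt h, hr0, hr.not_ge]

end GeneralizedOrthogonal

open GeneralizedOrthogonal Matrix in
theorem stmt13_general {Ω : Type*} [MeasurableSpace Ω] (P : Measure Ω)
    (n m : ℕ) (hm : 1 ≤ m) (hmn : m ≤ n)
    (X0 : Ω → ℝ)
    (hmom : ∀ k : ℕ, Integrable (fun ω => X0 ω ^ k) P)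
    (a : ℕ → ℝ) (ha : ∀ k, a k = ∫ ω, X0 ω ^ k ∂P)
    (b : ℕ → ℕ → ℝ)
    -- the matrix `M(x)`: first row `(1, x, …, xⁿ)`, then the rows `(a_k, …, a_{k+n})`
    -- for `k = 0,…,n−m`, then the rows `(a_{j,0}, …, a_{j,n})` for `j = 2,…,m`
    (M : ℝ → Matrix (Fin (n + 1)) (Fin (n + 1)) ℝ)
    (hM : ∀ x, M x = Matrix.of fun (r c : Fin (n + 1)) =>
      if (r : ℕ) = 0 then x ^ (c : ℕ)
      else if (r : ℕ) ≤ n - m + 1 then a ((r : ℕ) - 1 + (c : ℕ))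
      else b ((r : ℕ) - (n - m)) (c : ℕ))
    -- the matrix `N`: rows `(a_k, …, a_{k+n})` for `k = 0,…,n−m+1`, then the rows
    -- `(a_{j,0}, …, a_{j,n})` for `j = 2,…,m`
    (Nmat : Matrix (Fin (n + 1)) (Fin (n + 1)) ℝ)
    (hN : Nmat = Matrix.of fun (r c : Fin (n + 1)) =>
      if (r : ℕ) ≤ n - m + 1 then a ((r : ℕ) + (c : ℕ))
      else b ((r : ℕ) - (n - m)) (c : ℕ)) :
    (∀ k : ℕ, k ≤ n - m → ∫ ω, X0 ω ^ k * (M (X0 ω)).det ∂P = 0) ∧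
    (∫ ω, X0 ω ^ (n - m + 1) * (M (X0 ω)).det ∂P = (-1 : ℝ) ^ (n - m + 1) * Nmat.det) ∧
    (Nmat.det ≠ 0 → (∫ ω, X0 ω ^ (n - m + 1) * (M (X0 ω)).det ∂P) ≠ 0) := by
  set K := n - m
  have hK : K + 1 < n + 1 := by omega
  have hM' : ∀ x, M x = (polyMatrix (n := n) (K := K) a b 0).updateRow 0 fun c => x ^ (c : ℕ) :=
    fun x => (hM x).trans (polyMatrix_eq_updateRow a b x)
  have hmoment : ∀ k, ∫ ω, X0 ω ^ k * (M (X0 ω)).det ∂P =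
      ((polyMatrix (n := n) (K := K) a b 0).updateRow 0 fun c => a (k + c)).det := by
    intro k
    simp_rw [hM', integral_pow_mul_det_updateRow_pow _ _ _ hmom, ha]
  have hortho : ∀ k ≤ K, ∫ ω, X0 ω ^ k * (M (X0 ω)).det ∂P = 0 := by
    intro k hk
    rw [hmoment, ← polyMatrix_row_succ a b (by omega) hk]
    exact det_updateRow_eq_zero (by simp [Fin.ext_iff])
  have hlast : ∫ ω, X0 ω ^ (K + 1) * (M (X0 ω)).det ∂P = (-1) ^ (K + 1) * Nmat.det := by
    rw [hN, ← momentMatrix, momentMatrix_det a b hK, hmoment, ← mul_assoc, ← pow_add,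
      Even.neg_one_pow ⟨_, rfl⟩, one_mul]
  exact ⟨hortho, hlast, fun hNe => hlast ▸ mul_ne_zero (pow_ne_zero _ (by norm_num)) hNe⟩

theorem stmt13 {Ω : Type*} [MeasurableSpace Ω] (P : Measure Ω) [IsProbabilityMeasure P]
    (n m : ℕ) (hm : 1 ≤ m) (hmn : m ≤ n)
    (X0 : Ω → ℝ) (hmeas : Measurable X0)
    (hmom : ∀ k : ℕ, Integrable (fun ω => X0 ω ^ k) P)
    (a : ℕ → ℝ) (ha : ∀ k, a k = ∫ ω, X0 ω ^ k ∂P)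
    (b : ℕ → ℕ → ℝ)
    -- the matrix `M(x)`: first row `(1, x, …, xⁿ)`, then the rows `(a_k, …, a_{k+n})`
    -- for `k = 0,…,n−m`, then the rows `(a_{j,0}, …, a_{j,n})` for `j = 2,…,m`
    (M : ℝ → Matrix (Fin (n + 1)) (Fin (n + 1)) ℝ)
    (hM : ∀ x, M x = Matrix.of fun (r c : Fin (n + 1)) =>
      if (r : ℕ) = 0 then x ^ (c : ℕ)
      else if (r : ℕ) ≤ n - m + 1 then a ((r : ℕ) - 1 + (c : ℕ))
      else b ((r : ℕ) - (n - m)) (c : ℕ))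
    -- the matrix `N`: rows `(a_k, …, a_{k+n})` for `k = 0,…,n−m+1`, then the rows
    -- `(a_{j,0}, …, a_{j,n})` for `j = 2,…,m`
    (Nmat : Matrix (Fin (n + 1)) (Fin (n + 1)) ℝ)
    (hN : Nmat = Matrix.of fun (r c : Fin (n + 1)) =>
      if (r : ℕ) ≤ n - m + 1 then a ((r : ℕ) + (c : ℕ))
      else b ((r : ℕ) - (n - m)) (c : ℕ)) :
    (∀ k : ℕ, k ≤ n - m → ∫ ω, X0 ω ^ k * (M (X0 ω)).det ∂P = 0) ∧
    (∫ ω, X0 ω ^ (n - m + 1) * (M (X0 ω)).det ∂P = (-1 : ℝ) ^ (n - m + 1) * Nmat.det) ∧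
    (Nmat.det ≠ 0 → (∫ ω, X0 ω ^ (n - m + 1) * (M (X0 ω)).det ∂P) ≠ 0) :=
  stmt13_general P n m hm hmn X0 hmom a ha b M hM Nmat hN
end
end

section
/- Let n ≥ 1 and 1 ≤ m ≤ n. Let X₀, X₁, …, X_n be independent real random variables with finite moments of all orders, such that X₀, X₁, …, X_{n−m+1} are identically distributed. Then for every k = 0, 1, …, n−m: E[X₀^k · Δ(X₁,…,X_{n−m+1}) · Δ(X₀, X₁, …, X_n)] = 0. Equivalently, the polynomial p_{n,m}(x) := E[Δ(X₁,…,X_{n−m+1}) · Δ(x, X₁, …, X_n)] (a polynomial in x of degree at most n) satisfies E[X₀^k · p_{n,m}(X₀)] = 0 for every k = 0,…,n−m. -/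
/-!
Put `q = n - m + 1`, so that `X₀, …, X_q` are i.i.d., and let
`F(z) = z₀^k Δ(z₁,…,z_q) Δ(z₀,…,z_n)`. Moving `z_i` (`i ≤ q`) to the front by the inverse of the
cycle `(0 1 … i)` only permutes the exchangeable block, so it leaves `E[F(X)]` unchanged, and it
multiplies `Δ(z₀,…,z_n)` by `(-1)^i`. Summing over `i = 0, …, q` gives
`(q + 1) E[F(X)] = E[D(X) Δ(X)]` with `D = ∑ᵢ (-1)^i z_i^k Δ(z₀,…,ẑ_i,…,z_q)`. This is the Laplace
expansion along the first column of the determinant with columns `z^k, z^0, …, z^(q-1)`, which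
vanishes for `k < q` because two of its columns coincide. The statement about `p_{n,m}` is the
same identity after Fubini, `X₀` being independent of `(X₁, …, X_n)`.
-/

open MeasureTheory ProbabilityTheory Filter
open scoped BigOperators Topology

noncomputable section

/-- The Vandermonde product `Δ(y₀,…,y_{k-1}) = ∏_{i<j} (y_j − y_i)`. -/
def vdm {R : Type*} [CommRing R] {k : ℕ} (y : Fin k → R) : R :=
  ∏ p ∈ Finset.univ.filter (fun p : Fin k × Fin k => p.1 < p.2), (y p.2 - y p.1)

section Algebra

variable {R S : Type*} [CommRing R] [CommRing S]

theorem vdm_eq_det_vandermonde {k : ℕ} (y : Fin k → R) :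
    vdm y = (Matrix.vandermonde y).det := by
  rw [Matrix.det_vandermonde, vdm, ← Finset.univ_product_univ, Finset.prod_filter,
    Finset.prod_product]
  refine Finset.prod_congr rfl fun i _ => ?_
  rw [← Finset.prod_filter]
  exact Finset.prod_congr (by ext; simp) fun _ _ => rfl

theorem map_vdm (φ : R →+* S) {k : ℕ} (y : Fin k → R) : φ (vdm y) = vdm (φ ∘ y) := by
  simp only [vdm, map_prod, map_sub, Function.comp_apply]

@[fun_prop]
theorem continuous_vdm [TopologicalSpace R] [IsTopologicalRing R] {k : ℕ} :
    Continuous (vdm : (Fin k → R) → R) :=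
  continuous_finsetProd _ fun _ _ => (continuous_apply _).sub (continuous_apply _)

theorem vdm_comp_perm {k : ℕ} (y : Fin k → R) (σ : Equiv.Perm (Fin k)) :
    vdm (y ∘ σ) = Equiv.Perm.sign σ * vdm y := by
  rw [vdm_eq_det_vandermonde, vdm_eq_det_vandermonde, ← Matrix.det_permute]
  rfl

theorem sum_neg_one_pow_mul_pow_mul_vdm_comp_succAbove {q k : ℕ} (hk : k < q)
    (y : Fin (q + 1) → R) :
    ∑ i : Fin (q + 1), (-1) ^ (i : ℕ) * y i ^ k * vdm (y ∘ i.succAbove) = 0 := by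
  let A : Matrix (Fin (q + 1)) (Fin (q + 1)) R :=
    .of fun a b => y a ^ (Fin.cons k (fun b : Fin q => (b : ℕ)) : Fin (q + 1) → ℕ) b
  have hA : A.det = 0 :=
    Matrix.det_zero_of_column_eq (i := 0) (j := Fin.succ ⟨k, hk⟩) (Fin.succ_ne_zero _).symm
      fun a => by simp only [A, Matrix.of_apply, Fin.cons_zero, Fin.cons_succ]
  rw [Matrix.det_succ_column_zero] at hA
  refine Eq.trans (Finset.sum_congr rfl fun i _ => ?_) hA
  rw [vdm_eq_det_vandermonde]
  rfl

end Algebra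

theorem Fin.succAbove_castLE_castLE {n q : ℕ} (hq : q ≤ n) (i : Fin (q + 1)) (l : Fin q) :
    (Fin.castLE (Nat.succ_le_succ hq) i).succAbove (Fin.castLE hq l) =
      Fin.castLE (Nat.succ_le_succ hq) (i.succAbove l) := by
  ext
  simp only [Fin.succAbove, Fin.lt_def, Fin.val_castLE, Fin.val_castSucc]
  split_ifs <;> simp

section Integrand

variable {R S : Type*} [CommRing R] [CommRing S] {n q : ℕ}

def orthogonalityIntegrand (hq : q ≤ n) (k : ℕ) (z : Fin (n + 1) → R) : R :=
  z 0 ^ k * vdm (fun l : Fin q => z ⟨(l : ℕ) + 1, by have := l.isLt; omega⟩) * vdm z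

theorem map_orthogonalityIntegrand (φ : R →+* S) (hq : q ≤ n) (k : ℕ) (z : Fin (n + 1) → R) :
    φ (orthogonalityIntegrand hq k z) = orthogonalityIntegrand hq k (φ ∘ z) := by
  simp only [orthogonalityIntegrand, map_mul, map_pow, map_vdm]
  rfl

theorem orthogonalityIntegrand_eq_eval (hq : q ≤ n) (k : ℕ) (z : Fin (n + 1) → R) :
    orthogonalityIntegrand hq k z =
      MvPolynomial.eval z (orthogonalityIntegrand hq k MvPolynomial.X) := by
  rw [map_orthogonalityIntegrand]
  congr 1
  ext i
  simp

theorem orthogonalityIntegrand_comp_cycleRange_symm (hq : q ≤ n) (k : ℕ) (z : Fin (n + 1) → R)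
    (i : Fin (q + 1)) :
    orthogonalityIntegrand hq k (z ∘ (Fin.castLE (Nat.succ_le_succ hq) i).cycleRange.symm) =
      (-1) ^ (i : ℕ) * (z ∘ Fin.castLE (Nat.succ_le_succ hq)) i ^ k *
        vdm ((z ∘ Fin.castLE (Nat.succ_le_succ hq)) ∘ i.succAbove) * vdm z := by
  have hsign : (Equiv.Perm.sign (Fin.castLE (Nat.succ_le_succ hq) i).cycleRange.symm : R) =
      (-1) ^ (i : ℕ) := by
    simp [Equiv.Perm.sign_symm, Fin.sign_cycleRange]
  have htail : (fun l : Fin q => (z ∘ (Fin.castLE (Nat.succ_le_succ hq) i).cycleRange.symm)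
      ⟨(l : ℕ) + 1, by have := l.isLt; omega⟩) =
        (z ∘ Fin.castLE (Nat.succ_le_succ hq)) ∘ i.succAbove := by
    funext l
    change z ((Fin.castLE (Nat.succ_le_succ hq) i).cycleRange.symm (Fin.castLE hq l).succ) = _
    rw [Fin.cycleRange_symm_succ, Fin.succAbove_castLE_castLE]
    rfl
  rw [orthogonalityIntegrand, htail, vdm_comp_perm, hsign]
  simp only [Function.comp_apply, Fin.cycleRange_symm_zero]
  ring

theorem sum_orthogonalityIntegrand_comp_cycleRange_symm (hq : q ≤ n) {k : ℕ} (hk : k < q)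
    (z : Fin (n + 1) → R) :
    ∑ i : Fin (q + 1),
      orthogonalityIntegrand hq k (z ∘ (Fin.castLE (Nat.succ_le_succ hq) i).cycleRange.symm) =
        0 := by
  simp only [orthogonalityIntegrand_comp_cycleRange_symm, ← Finset.sum_mul,
    sum_neg_one_pow_mul_pow_mul_vdm_comp_succAbove hk, zero_mul]

end Integrand

section Probability

variable {Ω : Type*} [MeasurableSpace Ω] {P : Measure Ω}

theorem ProbabilityTheory.iIndepFun.identDistrib_comp_perm {ι β : Type*} [Fintype ι]
    [MeasurableSpace β] {X : ι → Ω → β} (hX : ∀ i, Measurable (X i)) (hindep : iIndepFun X P)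
    (σ : Equiv.Perm ι) (hσ : ∀ i, IdentDistrib (X (σ i)) (X i) P P) :
    IdentDistrib (fun ω i => X (σ i) ω) (fun ω i => X i ω) P P where
  aemeasurable_fst := (measurable_pi_lambda _ fun i => hX (σ i)).aemeasurable
  aemeasurable_snd := (measurable_pi_lambda _ hX).aemeasurable
  map_eq := by
    rw [(hindep.precomp σ.injective).map_fun_eq_pi_map fun i => (hX (σ i)).aemeasurable,
      hindep.map_fun_eq_pi_map fun i => (hX i).aemeasurable]
    exact congrArg Measure.pi (funext fun i => (hσ i).map_eq)

theorem integral_eq_zero_of_sum_comp_eq_zero {α J : Type*} [MeasurableSpace α] [Fintype J]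
    [Nonempty J] {Z : Ω → α} {T : J → α → α} (hT : ∀ j, IdentDistrib (fun ω => T j (Z ω)) Z P P)
    {G : α → ℝ} (hG : Measurable G) (hint : Integrable (fun ω => G (Z ω)) P)
    (hsum : ∀ z, ∑ j, G (T j z) = 0) :
    ∫ ω, G (Z ω) ∂P = 0 := by
  have hGT : ∀ j, IdentDistrib (fun ω => G (T j (Z ω))) (fun ω => G (Z ω)) P P :=
    fun j => (hT j).comp hG
  have hcard : (Fintype.card J : ℝ) * ∫ ω, G (Z ω) ∂P = 0 :=
    calc (Fintype.card J : ℝ) * ∫ ω, G (Z ω) ∂P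
        = ∑ j, ∫ ω, G (T j (Z ω)) ∂P := by simp [(hGT _).integral_eq]
      _ = ∫ ω, ∑ j, G (T j (Z ω)) ∂P :=
        (integral_finsetSum _ fun j _ => (hGT j).integrable_iff.mpr hint).symm
      _ = 0 := by simp [hsum]
  exact (mul_eq_zero.mp hcard).resolve_left (Nat.cast_ne_zero.mpr Fintype.card_ne_zero)

theorem ProbabilityTheory.iIndepFun.integrable_eval {ι : Type*} [Fintype ι] {X : ι → Ω → ℝ}
    (hX : ∀ i, Measurable (X i)) (hindep : iIndepFun X P)
    (hmom : ∀ i (k : ℕ), Integrable (fun ω => X i ω ^ k) P) (F : MvPolynomial ι ℝ) :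
    Integrable (fun ω => MvPolynomial.eval (fun i => X i ω) F) P := by
  simp only [MvPolynomial.eval_eq']
  refine integrable_finsetSum _ fun d _ => Integrable.const_mul ?_ _
  have := hindep.isProbabilityMeasure
  have (i : ι) : IsProbabilityMeasure (P.map (X i)) :=
    Measure.isProbabilityMeasure_map (hX i).aemeasurable
  have hlaw := hindep.map_fun_eq_pi_map fun i => (hX i).aemeasurable
  refine (integrable_map_measure (g := fun z : ι → ℝ => ∏ i, z i ^ d i)
    (by fun_prop : Continuous _).aestronglyMeasurable
    (measurable_pi_lambda _ hX).aemeasurable).mp ?_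
  rw [hlaw]
  exact Integrable.fintype_prod fun i => (integrable_map_measure
    (continuous_pow _).aestronglyMeasurable (hX i).aemeasurable).mpr (hmom i (d i))

theorem ProbabilityTheory.iIndepFun.indepFun_zero_tail {n : ℕ} {β : Type*} [MeasurableSpace β]
    {X : Fin (n + 1) → Ω → β} (hX : ∀ i, Measurable (X i)) (hindep : iIndepFun X P) :
    IndepFun (X 0) (fun ω (l : Fin n) => X l.succ ω) P := by
  have h := (hindep.indepFun_finset {0} (Finset.univ.erase 0) (by simp) hX).comp
    (measurable_pi_apply (⟨0, Finset.mem_singleton_self 0⟩ : ({0} : Finset (Fin (n + 1)))))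
    (measurable_pi_lambda (fun w (l : Fin n) => w ⟨l.succ, by simp [Fin.succ_ne_zero]⟩)
      fun _ => measurable_pi_apply _)
  exact h

theorem ProbabilityTheory.IndepFun.integral_comp_eq_integral_integral [IsFiniteMeasure P]
    {α β : Type*} [MeasurableSpace α] [MeasurableSpace β] {X : Ω → α} {Y : Ω → β}
    (hXY : IndepFun X Y P) (hX : Measurable X) (hY : Measurable Y) {G : α → β → ℝ}
    (hG : StronglyMeasurable (Function.uncurry G))
    (hint : Integrable (fun ω => G (X ω) (Y ω)) P) :
    ∫ ω, G (X ω) (Y ω) ∂P = ∫ ω, ∫ ω', G (X ω) (Y ω') ∂P ∂P := by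
  have hlaw := hXY.map_prod_eq_prod_map_map hX.aemeasurable hY.aemeasurable
  have hXY' : Measurable fun ω => (X ω, Y ω) := hX.prodMk hY
  have hint' : Integrable (Function.uncurry G) ((P.map X).prod (P.map Y)) := by
    rw [← hlaw]
    exact (integrable_map_measure hG.aestronglyMeasurable hXY'.aemeasurable).mpr hint
  calc ∫ ω, G (X ω) (Y ω) ∂P
      = ∫ xy, Function.uncurry G xy ∂((P.map X).prod (P.map Y)) := by
        rw [← hlaw, integral_map hXY'.aemeasurable hG.aestronglyMeasurable]
        rfl
    _ = ∫ x, ∫ y, G x y ∂(P.map Y) ∂(P.map X) := integral_prod _ hint'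
    _ = ∫ ω, ∫ y, G (X ω) y ∂(P.map Y) ∂P :=
        integral_map hX.aemeasurable hG.integral_prod_right'.aestronglyMeasurable
    _ = ∫ ω, ∫ ω', G (X ω) (Y ω') ∂P ∂P := by
        refine integral_congr_ae (ae_of_all _ fun ω => ?_)
        exact integral_map hY.aemeasurable
          (hG.comp_measurable measurable_prodMk_left).aestronglyMeasurable

end Probability

section Orthogonality

variable {Ω : Type*} [MeasurableSpace Ω] {P : Measure Ω} {n q : ℕ} {X : Fin (n + 1) → Ω → ℝ}

theorem continuous_orthogonalityIntegrand (hq : q ≤ n) (k : ℕ) :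
    Continuous (orthogonalityIntegrand (R := ℝ) hq k) := by
  rw [funext (orthogonalityIntegrand_eq_eval (R := ℝ) hq k)]
  exact MvPolynomial.continuous_eval _

theorem integrable_orthogonalityIntegrand (hq : q ≤ n) (hX : ∀ i, Measurable (X i))
    (hindep : iIndepFun X P) (hmom : ∀ i (k : ℕ), Integrable (fun ω => X i ω ^ k) P) (k : ℕ) :
    Integrable (fun ω => orthogonalityIntegrand hq k (fun i => X i ω)) P := by
  simpa only [orthogonalityIntegrand_eq_eval (R := ℝ)] using hindep.integrable_eval hX hmom _

theorem identDistrib_apply_perm_of_forall_gt_apply_eq (hX : ∀ i, Measurable (X i))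
    (hid : ∀ i : Fin (n + 1), (i : ℕ) ≤ q → IdentDistrib (X i) (X 0) P P)
    {σ : Equiv.Perm (Fin (n + 1))} (hσ : ∀ l : Fin (n + 1), q < l → σ l = l) (l : Fin (n + 1)) :
    IdentDistrib (X (σ l)) (X l) P P := by
  by_cases hl : (l : ℕ) ≤ q
  · have hσl : (σ l : ℕ) ≤ q := by
      by_contra! h
      have := σ.injective (hσ _ h)
      omega
    exact (hid _ hσl).trans (hid l hl).symm
  · rw [hσ l (by omega)]
    exact .refl (hX l).aemeasurable

theorem integral_orthogonalityIntegrand_eq_zero (hq : q ≤ n) (hX : ∀ i, Measurable (X i))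
    (hindep : iIndepFun X P) (hmom : ∀ i (k : ℕ), Integrable (fun ω => X i ω ^ k) P)
    (hid : ∀ i : Fin (n + 1), (i : ℕ) ≤ q → IdentDistrib (X i) (X 0) P P) {k : ℕ} (hk : k < q) :
    ∫ ω, orthogonalityIntegrand hq k (fun i => X i ω) ∂P = 0 := by
  refine integral_eq_zero_of_sum_comp_eq_zero
    (T := fun (i : Fin (q + 1)) z => z ∘ (Fin.castLE (Nat.succ_le_succ hq) i).cycleRange.symm)
    (fun i => hindep.identDistrib_comp_perm hX _ ?_)
    (continuous_orthogonalityIntegrand hq k).measurable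
    (integrable_orthogonalityIntegrand hq hX hindep hmom k)
    (sum_orthogonalityIntegrand_comp_cycleRange_symm hq hk)
  refine identDistrib_apply_perm_of_forall_gt_apply_eq hX hid fun l hl => ?_
  rw [Equiv.symm_apply_eq, Fin.cycleRange_of_gt]
  simp only [Fin.lt_def, Fin.val_castLE]
  omega

theorem integral_pow_mul_integral_eq_integral_orthogonalityIntegrand [IsFiniteMeasure P]
    (hq : q ≤ n) (hX : ∀ i, Measurable (X i)) (hindep : iIndepFun X P)
    (hmom : ∀ i (k : ℕ), Integrable (fun ω => X i ω ^ k) P) (k : ℕ) :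
    ∫ ω, X 0 ω ^ k * ∫ ω', vdm (fun l : Fin q => X ⟨(l : ℕ) + 1, by have := l.isLt; omega⟩ ω') *
        vdm (Fin.cons (X 0 ω) (fun l : Fin n => X l.succ ω')) ∂P ∂P =
      ∫ ω, orthogonalityIntegrand hq k (fun i => X i ω) ∂P := by
  let G : ℝ → (Fin n → ℝ) → ℝ := fun x w =>
    x ^ k * (vdm (fun l : Fin q => w (Fin.castLE hq l)) * vdm (Fin.cons x w : Fin (n + 1) → ℝ))
  have hG : Continuous (Function.uncurry G) := by
    simp only [G, Function.uncurry_def]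
    fun_prop
  have hGX : ∀ ω, G (X 0 ω) (fun l => X l.succ ω) =
      orthogonalityIntegrand hq k (fun i => X i ω) := by
    intro ω
    rw [orthogonalityIntegrand, mul_assoc, ← Fin.cons_self_tail (fun i => X i ω)]
    rfl
  have hint : Integrable (fun ω => G (X 0 ω) (fun l => X l.succ ω)) P := by
    simpa only [hGX] using integrable_orthogonalityIntegrand hq hX hindep hmom k
  simp only [← hGX, (hindep.indepFun_zero_tail hX).integral_comp_eq_integral_integral (hX 0)
    (measurable_pi_lambda _ fun l => hX l.succ) hG.stronglyMeasurable hint, G, integral_const_mul]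
  rfl

end Orthogonality

theorem stmt14 {Ω : Type*} [MeasurableSpace Ω] (P : Measure Ω) [IsProbabilityMeasure P]
    (n m : ℕ) (hm : 1 ≤ m) (hmn : m ≤ n)
    (X : Fin (n + 1) → Ω → ℝ) (hmeas : ∀ i, Measurable (X i))
    (hindep : iIndepFun X P)
    (hmom : ∀ i (k : ℕ), Integrable (fun ω => X i ω ^ k) P)
    (hid : ∀ i : Fin (n + 1), (i : ℕ) ≤ n - m + 1 → IdentDistrib (X i) (X 0) P P)
    (p : ℝ → ℝ)
    (hp : ∀ x, p x = ∫ ω,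
        vdm (fun l : Fin (n - m + 1) => X ⟨(l : ℕ) + 1, by have := l.isLt; omega⟩ ω) *
          vdm (Fin.cons x (fun l : Fin n => X l.succ ω)) ∂P) :
    (∀ k : ℕ, k ≤ n - m →
      ∫ ω, X 0 ω ^ k *
          vdm (fun l : Fin (n - m + 1) => X ⟨(l : ℕ) + 1, by have := l.isLt; omega⟩ ω) *
          vdm (fun l : Fin (n + 1) => X l ω) ∂P = 0) ∧
    (∀ k : ℕ, k ≤ n - m → ∫ ω, X 0 ω ^ k * p (X 0 ω) ∂P = 0) := by
  have hq : n - m + 1 ≤ n := by omega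
  have horth : ∀ k : ℕ, k ≤ n - m →
      ∫ ω, orthogonalityIntegrand hq k (fun i => X i ω) ∂P = 0 := fun k hk =>
    integral_orthogonalityIntegrand_eq_zero hq hmeas hindep hmom hid (by omega)
  refine ⟨horth, fun k hk => ?_⟩
  simp only [hp]
  rw [integral_pow_mul_integral_eq_integral_orthogonalityIntegrand hq hmeas hindep hmom]
  exact horth k hk
end
end

section
/- Let d ≥ 0 and let n, m ∈ ℕ^{d+1} be multi-indices with 0 < m and m ≤ n componentwise. Set s = s(n) − 1 and r = s(n−m) − 1, and fix enumerations {k ∈ ℕ^{d+1} : 0 ≤ k ≤ n} = {k₀ = 0, k₁, …, k_s = n} and {h ∈ ℕ^{d+1} : 0 ≤ h ≤ n−m} = {h₀ = 0, h₁, …, h_r = n−m}. Let X₀ be an ℝ^{d+1}-valued random vector with finite joint moments of all orders, set a_k = E[X₀^k] for each multi-index k, and let a_{j,k} be real numbers for j = 2,…,s−r and multi-indices k (for instance joint moments of further random vectors). Define p_{n,m}(x), for x ∈ ℝ^{d+1}, as the determinant of the (s+1)×(s+1) matrix whose first row is (1, x^{k₁}, x^{k₂}, …, x^{k_s}), whose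 next r+1 rows are (a_{h_i}, a_{k₁+h_i}, a_{k₂+h_i}, …, a_{k_s+h_i}) for i = 0, 1, …, r, and whose last s−r−1 rows are (a_{j,k₀}, a_{j,k₁}, …, a_{j,k_s}) for j = 2,…,s−r. Then E[X₀^k · p_{n,m}(X₀)] = 0 for every multi-index k with 0 ≤ k ≤ n − m. -/
open MeasureTheory ProbabilityTheory Filter
open scoped BigOperators Topology

noncomputable section

/-- `s(n) = ∏_j (n_j + 1)`, the number of multi-indices `k` with `0 ≤ k ≤ n`. -/
def sCard (d : ℕ) (n : Fin (d + 1) → ℕ) : ℕ := ∏ j, (n j + 1)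

/-! The determinant of `M(x)` is linear in its first row, the only row that depends on `x`, so for
`k = h_i` the moment `E[X₀^k p_{n,m}(X₀)]` is the determinant of `M` with first row replaced by
`E[X₀^{h_i + k_c}] = a_{k_c + h_i}`. That is row `i + 1` of the same matrix, so the determinant
vanishes; the row exists because `s(n − m) < s(n)` when `0 < m ≤ n`. -/

namespace Matrix

theorem det_updateRow_eq_sum_mul {R ι : Type*} [CommRing R] [Fintype ι] [DecidableEq ι]
    (A : Matrix ι ι R) (i : ι) (v : ι → R) :
    (A.updateRow i v).det = ∑ j, v j * (A.updateRow i (Pi.single j 1)).det := by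
  rw [det_eq_sum_mul_adjugate_row _ i]
  simp only [adjugate_apply, updateRow_idem, updateRow_self]

end Matrix

theorem integral_det_updateRow {Ω ι 𝕜 : Type*} [MeasurableSpace Ω] {μ : Measure Ω} [RCLike 𝕜]
    [Fintype ι] [DecidableEq ι] (A : Matrix ι ι 𝕜) (i : ι) {f : Ω → ι → 𝕜}
    (hf : ∀ j, Integrable (fun ω => f ω j) μ) :
    ∫ ω, (A.updateRow i (f ω)).det ∂μ = (A.updateRow i fun j => ∫ ω, f ω j ∂μ).det := by
  have hexpand := fun ω => Matrix.det_updateRow_eq_sum_mul A i (f ω)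
  rw [integral_congr_ae (ae_of_all _ hexpand), Matrix.det_updateRow_eq_sum_mul,
    integral_finsetSum _ fun j _ => (hf j).mul_const _]
  simp only [integral_mul_const]

theorem sCard_strictMono (d : ℕ) : StrictMono (sCard d) := by
  intro n n' h
  obtain ⟨hle, j, hj⟩ := Pi.lt_def.1 h
  exact Finset.prod_lt_prod (fun _ _ => Nat.succ_pos _) (fun l _ => Nat.succ_le_succ (hle l))
    ⟨j, Finset.mem_univ _, Nat.succ_lt_succ hj⟩

theorem stmt15 {Ω : Type*} [MeasurableSpace Ω] (P : Measure Ω)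
    (d : ℕ) (n m : Fin (d + 1) → ℕ) (hm0 : m ≠ 0) (hmn : m ≤ n)
    (X0 : Ω → Fin (d + 1) → ℝ)
    (hmom : ∀ k : Fin (d + 1) → ℕ, Integrable (fun ω => ∏ j, X0 ω j ^ k j) P)
    (a : (Fin (d + 1) → ℕ) → ℝ) (ha : ∀ k, a k = ∫ ω, ∏ j, X0 ω j ^ k j ∂P)
    (b : ℕ → (Fin (d + 1) → ℕ) → ℝ)
    -- an enumeration `k₀ = 0, k₁, …, k_s = n` of the multi-indices `≤ n`
    (K : Fin (sCard d n) → Fin (d + 1) → ℕ)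
    -- an enumeration `h₀ = 0, h₁, …, h_r = n − m` of the multi-indices `≤ n − m`
    (H : Fin (sCard d (n - m)) → Fin (d + 1) → ℕ)
    (hH3 : ∀ k : Fin (d + 1) → ℕ, k ≤ n - m → ∃ i, H i = k)
    -- the matrix `M(x)`: first row `(1, x^{k₁}, …, x^{k_s})`, then the rows
    -- `(a_{k_c + h_i})_c` for `i = 0,…,r`, then the rows `(b_{j, k_c})_c` for `j = 2,…,s−r`
    (M : (Fin (d + 1) → ℝ) → Matrix (Fin (sCard d n)) (Fin (sCard d n)) ℝ)
    (hM : ∀ x, M x = Matrix.of fun (r' c : Fin (sCard d n)) =>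
      if h0 : (r' : ℕ) = 0 then ∏ j, x j ^ K c j
      else if hle : (r' : ℕ) ≤ sCard d (n - m) then
        a (K c + H ⟨(r' : ℕ) - 1, by omega⟩)
      else b ((r' : ℕ) - sCard d (n - m) + 1) (K c)) :
    ∀ k : Fin (d + 1) → ℕ, k ≤ n - m →
      ∫ ω, (∏ j, X0 ω j ^ k j) * (M (X0 ω)).det ∂P = 0 := by
  intro k hk
  obtain ⟨i, rfl⟩ := hH3 k hk
  have hrs : sCard d (n - m) < sCard d n := by
    obtain ⟨j, hj⟩ := Function.ne_iff.1 hm0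
    refine sCard_strictMono d (Pi.lt_def.2 ⟨tsub_le_self, j, ?_⟩)
    exact Nat.sub_lt_self (Nat.pos_of_ne_zero hj) (hmn j)
  let top : Fin (sCard d n) := ⟨0, by omega⟩
  let row : Fin (sCard d n) := ⟨i + 1, by omega⟩
  have hM_updateRow : ∀ x, M x = (M 0).updateRow top fun c => ∏ j, x j ^ K c j := by
    intro x
    ext r c
    by_cases hr : r = top
    · subst hr; simp [hM, top]
    · have hr' : (r : ℕ) ≠ 0 := fun h => hr (Fin.ext h)
      simp [hM, hr, hr']
  have hmul : ∀ x, (∏ j, x j ^ H i j) * (M x).det =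
      ((M 0).updateRow top fun c => ∏ j, x j ^ (H i + K c) j).det := by
    intro x
    rw [hM_updateRow, ← Matrix.det_updateRow_smul]
    congr 2
    ext c
    simp [pow_add, Finset.prod_mul_distrib]
  simp_rw [hmul]
  rw [integral_det_updateRow _ _ fun c => hmom _]
  have hrow : row ≠ top := by simp [top, row, Fin.ext_iff]
  refine Matrix.det_zero_of_row_eq hrow.symm ?_
  ext c
  simp [Matrix.updateRow_ne hrow, hM, row, ha, add_comm]
end
end

section
/- Let X₁,…,X_N be i.i.d. real random variables with finite moments of all orders, and set a_j = E[X₁^j]. Suppose there exist ζ₁,…,ζ_n, c₁,…,c_n ∈ ℂ such that a_j = ∑_{i=1}^n c_i·ζ_i^j for every j = 0, 1, …, 2n−1. Then for every integer k ≥ 1 with 2k(N−1) ≤ 2n−1: E[Δ(X₁,…,X_N)^{2k}] = ∑_{(i₁,…,i_N) ∈ {1,…,n}^N} c_{i₁}·c_{i₂}⋯c_{i_N} · Δ(ζ_{i₁}, ζ_{i₂}, …, ζ_{i_N})^{2k}. -/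
open MeasureTheory ProbabilityTheory Filter
open scoped BigOperators Topology

noncomputable section

/-!
`Δ(x₁,…,x_N)^{2k}` is a polynomial with integer coefficients in which each variable has degree
at most `2k(N-1) ≤ 2n-1`, since `x_i` occurs in exactly `N-1` factors of `Δ`. For i.i.d. `X_i`,
independence turns the expectation of a monomial `∏ X_i^{m_i}` into `∏ a_{m_i}`, and every
`m_i ≤ 2n-1`, so each `a_{m_i}` may be replaced by `∑_l c_l ζ_l^{m_i}`. Expanding the product of
these sums over `i` gives `∑_{idx} ∏_i c_{idx i} ζ_{idx i}^{m_i}`; summing over the monomials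
reassembles `∑_{idx} (∏_i c_{idx i}) Δ(ζ_{idx 1},…,ζ_{idx N})^{2k}`.
-/

open MvPolynomial Finset

namespace MvPolynomial

variable {ι : Type*} [Fintype ι]

lemma aeval_int_eq_sum {R : Type*} [CommRing R] (y : ι → R) (Q : MvPolynomial ι ℤ) :
    aeval y Q = ∑ m ∈ Q.support, ((Q.coeff m : ℤ) : R) * ∏ i, y i ^ m i := by
  rw [aeval_def, eval₂_eq']
  simp only [algebraMap_int_eq, eq_intCast]

lemma sum_prod_mul_aeval {R κ : Type*} [CommRing R] [Fintype κ] [DecidableEq ι]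
    (Q : MvPolynomial ι ℤ) (c ζ : κ → R) :
    ∑ idx : ι → κ, (∏ i, c (idx i)) * aeval (fun i => ζ (idx i)) Q =
      ∑ m ∈ Q.support, ((Q.coeff m : ℤ) : R) * ∏ i, ∑ j, c j * ζ j ^ m i := by
  simp only [aeval_int_eq_sum, Fintype.prod_sum, mul_sum, prod_mul_distrib]
  rw [sum_comm]
  refine sum_congr rfl fun m _ => sum_congr rfl fun idx _ => ?_
  ring

end MvPolynomial

section Moments

variable {Ω ι : Type*} [MeasurableSpace Ω] {P : Measure Ω} [Fintype ι]
  {X : ι → Ω → ℝ} {X₀ : Ω → ℝ}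

lemma ProbabilityTheory.iIndepFun.integrable_fun_prod_comp {𝓧 𝕜 : Type*}
    [MeasurableSpace 𝓧] [NormedCommRing 𝕜] {Y : ι → Ω → 𝓧} (hY : iIndepFun Y P)
    (mY : ∀ i, Measurable (Y i))
    {f : ι → 𝓧 → 𝕜} (hf : ∀ i, Integrable (f i) (P.map (Y i))) :
    Integrable (fun ω => ∏ i, f i (Y i ω)) P := by
  have := hY.isProbabilityMeasure
  have h := Integrable.fintype_prod hf
  rw [← hY.map_fun_eq_pi_map fun i => (mY i).aemeasurable] at h
  exact h.comp_measurable (measurable_pi_lambda _ mY)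

lemma integrable_prod_pow_of_iid (mX : ∀ i, Measurable (X i)) (hX : iIndepFun X P)
    (hid : ∀ i, IdentDistrib (X i) X₀ P P)
    (hmom : ∀ j : ℕ, Integrable (fun ω => X₀ ω ^ j) P)
    (m : ι → ℕ) : Integrable (fun ω => ∏ i, X i ω ^ m i) P :=
  hX.integrable_fun_prod_comp mX fun i => by
    rw [(hid i).map_eq]
    exact (integrable_map_measure (continuous_pow (m i)).aestronglyMeasurable
      (hid i).aemeasurable_snd).2 (hmom (m i))

lemma integral_prod_pow_of_iid (mX : ∀ i, Measurable (X i)) (hX : iIndepFun X P)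
    (hid : ∀ i, IdentDistrib (X i) X₀ P P) (m : ι → ℕ) :
    ∫ ω, ∏ i, X i ω ^ m i ∂P = ∏ i, ∫ ω, X₀ ω ^ m i ∂P := by
  rw [hX.integral_fun_prod_comp (f := fun i x => x ^ m i) (fun i => (mX i).aemeasurable)
    fun i => (continuous_pow (m i)).aestronglyMeasurable]
  exact prod_congr rfl fun i _ => ((hid i).comp (measurable_id.pow_const (m i))).integral_eq

lemma integral_aeval_of_iid (mX : ∀ i, Measurable (X i)) (hX : iIndepFun X P)
    (hid : ∀ i, IdentDistrib (X i) X₀ P P)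
    (hmom : ∀ j : ℕ, Integrable (fun ω => X₀ ω ^ j) P)
    (Q : MvPolynomial ι ℤ) :
    ∫ ω, aeval (X · ω) Q ∂P =
      ∑ m ∈ Q.support, ((Q.coeff m : ℤ) : ℝ) * ∏ i, ∫ ω, X₀ ω ^ m i ∂P := by
  simp only [aeval_int_eq_sum]
  rw [integral_finsetSum]
  · simp only [integral_const_mul, integral_prod_pow_of_iid mX hX hid]
  · exact fun m _ => (integrable_prod_pow_of_iid mX hX hid hmom m).const_mul _

theorem integral_aeval_eq_sum_of_moments (mX : ∀ i, Measurable (X i)) (hX : iIndepFun X P)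
    (hid : ∀ i, IdentDistrib (X i) X₀ P P)
    (hmom : ∀ j : ℕ, Integrable (fun ω => X₀ ω ^ j) P)
    [DecidableEq ι] (Q : MvPolynomial ι ℤ) {d : ℕ} (hQ : ∀ i, degreeOf i Q ≤ d)
    {κ : Type*} [Fintype κ] (c ζ : κ → ℂ)
    (ha : ∀ j : ℕ, j ≤ d → ((∫ ω, X₀ ω ^ j ∂P : ℝ) : ℂ) = ∑ l, c l * ζ l ^ j) :
    ((∫ ω, aeval (X · ω) Q ∂P : ℝ) : ℂ) =
      ∑ idx : ι → κ, (∏ i, c (idx i)) * aeval (fun i => ζ (idx i)) Q := by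
  rw [integral_aeval_of_iid mX hX hid hmom, sum_prod_mul_aeval]
  push_cast
  refine sum_congr rfl fun m hm => congrArg _ <| prod_congr rfl fun i _ => ?_
  exact ha _ ((monomial_le_degreeOf i hm).trans (hQ i))

end Moments

lemma card_filter_lt_and_incident_le {N : ℕ} (i : Fin N) :
    #{p : Fin N × Fin N | p.1 < p.2 ∧ (p.1 = i ∨ p.2 = i)} ≤ N - 1 := by
  have hsub : ({p : Fin N × Fin N | p.1 < p.2 ∧ (p.1 = i ∨ p.2 = i)} : Finset _) ⊆
      (Iio i).image (·, i) ∪ (Ioi i).image (i, ·) := by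
    rintro ⟨a, b⟩ hp
    simp only [mem_filter, mem_univ, true_and] at hp
    simp only [mem_union, mem_image, mem_Iio, mem_Ioi, Prod.mk.injEq]
    rcases hp with ⟨hab, rfl | rfl⟩
    · exact Or.inr ⟨b, hab, rfl, rfl⟩
    · exact Or.inl ⟨a, hab, rfl, rfl⟩
  calc _ ≤ #(Iio i) + #(Ioi i) :=
        (card_le_card hsub).trans <|
          (card_union_le _ _).trans (add_le_add card_image_le card_image_le)
    _ = N - 1 := by rw [Fin.card_Iio, Fin.card_Ioi]; omega

def vandermondePoly (N : ℕ) : MvPolynomial (Fin N) ℤ :=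
  vdm X

lemma aeval_vandermondePoly {R : Type*} [CommRing R] {N : ℕ} (y : Fin N → R) :
    aeval y (vandermondePoly N) = vdm y := by
  simp [vandermondePoly, vdm]

lemma degreeOf_vandermondePoly_le {N : ℕ} (i : Fin N) :
    degreeOf i (vandermondePoly N) ≤ N - 1 := by
  have hfactor (a b : Fin N) :
      degreeOf i (X b - X a : MvPolynomial (Fin N) ℤ) ≤ if a = i ∨ b = i then 1 else 0 := by
    refine (degreeOf_sub_le i _ _).trans ?_
    rw [degreeOf_X, degreeOf_X]
    split_ifs <;> simp_all
  calc degreeOf i (vandermondePoly N)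
      ≤ ∑ p : Fin N × Fin N with p.1 < p.2,
          degreeOf i (X p.2 - X p.1 : MvPolynomial (Fin N) ℤ) :=
        degreeOf_prod_le i _ _
    _ ≤ ∑ p : Fin N × Fin N with p.1 < p.2, if p.1 = i ∨ p.2 = i then 1 else 0 :=
        sum_le_sum fun p _ => hfactor p.1 p.2
    _ ≤ N - 1 := by
        rw [sum_boole, filter_filter, Nat.cast_id]
        exact card_filter_lt_and_incident_le i

theorem stmt17_general {Ω : Type*} [MeasurableSpace Ω] (P : Measure Ω)
    (N n : ℕ) (hN : 1 ≤ N)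
    (X : Fin N → Ω → ℝ) (hmeas : ∀ i, Measurable (X i))
    (hindep : iIndepFun X P)
    (hid : ∀ i, IdentDistrib (X i) (X ⟨0, hN⟩) P P)
    (hmom : ∀ j : ℕ, Integrable (fun ω => X ⟨0, hN⟩ ω ^ j) P)
    (ζ c : Fin n → ℂ)
    (ha : ∀ j : ℕ, j ≤ 2 * n - 1 →
      ((∫ ω, X ⟨0, hN⟩ ω ^ j ∂P : ℝ) : ℂ) = ∑ i, c i * ζ i ^ j) :
    ∀ k : ℕ, 1 ≤ k → 2 * k * (N - 1) ≤ 2 * n - 1 →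
      ((∫ ω, (vdm fun i => X i ω) ^ (2 * k) ∂P : ℝ) : ℂ) =
        ∑ idx : Fin N → Fin n,
          (∏ j, c (idx j)) * (vdm fun j => ζ (idx j)) ^ (2 * k) := by
  intro k _ hk
  have hdeg (i : Fin N) : degreeOf i (vandermondePoly N ^ (2 * k)) ≤ 2 * n - 1 :=
    (degreeOf_pow_le i _ _).trans ((Nat.mul_le_mul_left _ (degreeOf_vandermondePoly_le i)).trans hk)
  simpa only [map_pow, aeval_vandermondePoly] using
    integral_aeval_eq_sum_of_moments hmeas hindep hid hmom _ hdeg c ζ ha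

theorem stmt17 {Ω : Type*} [MeasurableSpace Ω] (P : Measure Ω) [IsProbabilityMeasure P]
    (N n : ℕ) (hN : 1 ≤ N) (hn : 1 ≤ n)
    (X : Fin N → Ω → ℝ) (hmeas : ∀ i, Measurable (X i))
    (hindep : iIndepFun X P)
    (hid : ∀ i, IdentDistrib (X i) (X ⟨0, hN⟩) P P)
    (hmom : ∀ j : ℕ, Integrable (fun ω => X ⟨0, hN⟩ ω ^ j) P)
    (ζ c : Fin n → ℂ)
    (ha : ∀ j : ℕ, j ≤ 2 * n - 1 →
      ((∫ ω, X ⟨0, hN⟩ ω ^ j ∂P : ℝ) : ℂ) = ∑ i, c i * ζ i ^ j) :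
    ∀ k : ℕ, 1 ≤ k → 2 * k * (N - 1) ≤ 2 * n - 1 →
      ((∫ ω, (vdm fun i => X i ω) ^ (2 * k) ∂P : ℝ) : ℂ) =
        ∑ idx : Fin N → Fin n,
          (∏ j, c (idx j)) * (vdm fun j => ζ (idx j)) ^ (2 * k) :=
  stmt17_general P N n hN X hmeas hindep hid hmom ζ c ha
end
end

section
/- Let X be a real random variable with finite moments of all orders, let n ≥ 1, and let p be a real polynomial of degree exactly n such that E[X^k · p(X)] = 0 for every k = 0, 1, …, n−1. Suppose p has n pairwise distinct real roots r₁, …, r_n. Then there exist unique real numbers c₁, …, c_n such that, for every x ∈ ℝ, E[(X − x)^{2n−1}] = ∑_{j=1}^n c_j · (r_j − x)^{2n−1}. -/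
/-!
Gauss quadrature. For a linear functional `L` on polynomials, the Christoffel numbers
`c j = L ℓ_j`, with `ℓ_j` the Lagrange basis at the nodes, make `L f = ∑ c j * f (r j)` exact for
`deg f < n`. If `p` is orthogonal to all polynomials of degree `< n` and vanishes at the nodes,
then for `deg f < 2n` write `f = f % p + p * (f / p)`: the second term is killed by `L` and by
evaluation at the nodes, so the rule is exact up to degree `2n - 1`, in particular for
`(t - x) ^ (2n - 1)`. For uniqueness, the coefficient of `x ^ (N - i)` in
`∑ c j * (r j - x) ^ N` is a nonzero multiple of `∑ c j * r j ^ i`; as `N = 2n - 1 ≥ n - 1`,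
if the sum vanishes identically then all these power sums with `i < n` vanish, and the
Vandermonde matrix of the distinct nodes forces `c = 0`.
-/

open MeasureTheory Polynomial Finset

section GaussQuadrature

variable {K : Type*} [Field K] (L : K[X] →ₗ[K] K) {n : ℕ}

theorem map_mul_eq_zero_of_degree_lt {p g : K[X]}
    (horth : ∀ k < n, L (X ^ k * p) = 0) (hg : g.degree < n) : L (g * p) = 0 := by
  classical
  have hspan : degreeLT K n ≤ LinearMap.ker (L ∘ₗ LinearMap.mulRight K p) := by
    rw [degreeLT_eq_span_X_pow, Submodule.span_le, coe_image]
    rintro _ ⟨k, hk, rfl⟩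
    simpa using horth k (by simpa using hk)
  simpa using hspan (mem_degreeLT.2 hg)

theorem map_eq_sum_lagrange_basis {r : Fin n → K} (hr : Function.Injective r) {f : K[X]}
    (hf : f.degree < n) :
    L f = ∑ j, L (Lagrange.basis univ r j) * f.eval (r j) := by
  conv_lhs => rw [Lagrange.eq_interpolate (s := univ) (f := f) hr.injOn (by simpa using hf)]
  simp only [Lagrange.interpolate_apply, map_sum, ← smul_eq_C_mul, map_smul, smul_eq_mul]
  exact sum_congr rfl fun j _ => mul_comm _ _

theorem map_eq_sum_lagrange_basis_of_orthogonal {p : K[X]} (hp : p.degree = n)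
    (horth : ∀ k < n, L (X ^ k * p) = 0) {r : Fin n → K} (hr : Function.Injective r)
    (hroot : ∀ j, p.eval (r j) = 0) {f : K[X]} (hf : f.degree < ↑(2 * n)) :
    L f = ∑ j, L (Lagrange.basis univ r j) * f.eval (r j) := by
  have hp0 : p ≠ 0 := fun h => by simp [h] at hp
  have hmod : (f % p).degree < n := hp ▸ degree_mod_lt f hp0
  have hdiv : (f / p).degree < n := by
    rcases lt_or_ge f.degree p.degree with hlt | hle
    · simp [(Polynomial.div_eq_zero_iff hp0).2 hlt]
    · have hsum := degree_add_div hp0 hle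
      rw [hp] at hsum
      rw [← hsum, two_mul, Nat.cast_add] at hf
      exact (WithBot.add_lt_add_iff_left WithBot.coe_ne_bot).1 hf
  have hdecomp := EuclideanDomain.mod_add_div f p
  have heval : ∀ j, f.eval (r j) = (f % p).eval (r j) := fun j => by
    conv_lhs => rw [← hdecomp]
    simp [hroot j]
  calc L f = L (f % p) := by
        conv_lhs => rw [← hdecomp]
        rw [map_add, mul_comm, map_mul_eq_zero_of_degree_lt L horth hdiv, add_zero]
    _ = ∑ j, L (Lagrange.basis univ r j) * f.eval (r j) := by
        simp only [heval]
        exact map_eq_sum_lagrange_basis L hr hmod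

end GaussQuadrature

theorem sum_mul_pow_eq_zero_of_forall_sum_mul_sub_pow_eq_zero {K ι : Type*} [Field K]
    [CharZero K] [Fintype ι] {c r : ι → K} {N : ℕ} (h : ∀ x, ∑ j, c j * (r j - x) ^ N = 0)
    {i : ℕ} (hi : i ≤ N) : ∑ j, c j * r j ^ i = 0 := by
  set g : K[X] := ∑ j, C (c j) * (X + C (r j)) ^ N
  have hg : g = 0 := Polynomial.funext fun y => by
    simpa only [g, eval_finsetSum, eval_mul, eval_C, eval_pow, eval_add, eval_X, eval_zero,
      sub_neg_eq_add, add_comm] using h (-y)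
  have hcoeff := congrArg (coeff · (N - i)) hg
  simp only [g, finsetSum_coeff, coeff_C_mul, coeff_X_add_C_pow, Nat.sub_sub_self hi,
    coeff_zero] at hcoeff
  have hchoose : (N.choose (N - i) : K) ≠ 0 := Nat.cast_ne_zero.2 (Nat.choose_pos (by omega)).ne'
  have hmul : (∑ j, c j * r j ^ i) * N.choose (N - i) = 0 := by
    simpa only [sum_mul, mul_assoc] using hcoeff
  exact (mul_eq_zero.1 hmul).resolve_right hchoose

theorem sum_mul_sub_pow_injective {K : Type*} [Field K] [CharZero K] {n N : ℕ}
    {r : Fin n → K} (hr : Function.Injective r) (hN : n ≤ N + 1) :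
    Function.Injective fun (c : Fin n → K) (x : K) => ∑ j, c j * (r j - x) ^ N := by
  intro c c' h
  have hsub : ∀ x, ∑ j, (c - c') j * (r j - x) ^ N = 0 := fun x => by
    simp [sub_mul, sum_sub_distrib, congrFun h x]
  rw [← sub_eq_zero]
  exact Matrix.eq_zero_of_forall_pow_sum_mul_pow_eq_zero hr fun i =>
    sum_mul_pow_eq_zero_of_forall_sum_mul_sub_pow_eq_zero hsub (by omega)

section Expectation

variable {Ω : Type*} [MeasurableSpace Ω] {P : Measure Ω} {X : Ω → ℝ}

theorem integrable_eval_of_integrable_pow (hmom : ∀ k : ℕ, Integrable (fun ω => X ω ^ k) P)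
    (f : ℝ[X]) : Integrable (fun ω => f.eval (X ω)) P := by
  induction f using Polynomial.induction_on' with
  | add f g hf hg => simp only [eval_add]; exact hf.add hg
  | monomial k a => simpa using (hmom k).const_mul a

@[simps]
noncomputable def polynomialExpectation (hmom : ∀ k : ℕ, Integrable (fun ω => X ω ^ k) P) :
    ℝ[X] →ₗ[ℝ] ℝ where
  toFun f := ∫ ω, f.eval (X ω) ∂P
  map_add' f g := by
    simpa using integral_add (integrable_eval_of_integrable_pow hmom f)
      (integrable_eval_of_integrable_pow hmom g)
  map_smul' a f := by simp [integral_const_mul]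

end Expectation

theorem stmt18_general {Ω : Type*} [MeasurableSpace Ω] (P : Measure Ω) (X : Ω → ℝ)
    (hmom : ∀ k : ℕ, Integrable (fun ω => X ω ^ k) P)
    (n : ℕ) (hn : 1 ≤ n)
    (p : Polynomial ℝ) (hdeg : p.natDegree = n)
    (horth : ∀ k : ℕ, k < n → ∫ ω, X ω ^ k * p.eval (X ω) ∂P = 0)
    (r : Fin n → ℝ) (hrinj : Function.Injective r)
    (hroot : ∀ j, p.eval (r j) = 0) :
    ∃! cvec : Fin n → ℝ, ∀ x : ℝ,
      ∫ ω, (X ω - x) ^ (2 * n - 1) ∂P = ∑ j, cvec j * (r j - x) ^ (2 * n - 1) := by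
  set L := polynomialExpectation hmom
  have hL : ∀ k < n, L (Polynomial.X ^ k * p) = 0 := by simpa [L] using horth
  have hquad : ∀ x : ℝ, ∫ ω, (X ω - x) ^ (2 * n - 1) ∂P
      = ∑ j, L (Lagrange.basis univ r j) * (r j - x) ^ (2 * n - 1) := fun x => by
    have hdegx : ((Polynomial.X - C x) ^ (2 * n - 1)).degree < ↑(2 * n) := by
      rw [degree_pow, degree_X_sub_C, nsmul_one]
      exact_mod_cast (by omega)
    have key := map_eq_sum_lagrange_basis_of_orthogonal L
      ((degree_eq_iff_natDegree_eq_of_pos hn).2 hdeg) hL hrinj hroot hdegx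
    simpa only [L, polynomialExpectation_apply, eval_pow, eval_sub, eval_X, eval_C] using key
  refine ⟨_, hquad, fun c hc => sum_mul_sub_pow_injective (N := 2 * n - 1) hrinj (by omega) ?_⟩
  exact funext fun x => (hc x).symm.trans (hquad x)

theorem stmt18 {Ω : Type*} [MeasurableSpace Ω] (P : Measure Ω) [IsProbabilityMeasure P]
    (X : Ω → ℝ) (hmeas : Measurable X)
    (hmom : ∀ k : ℕ, Integrable (fun ω => X ω ^ k) P)
    (n : ℕ) (hn : 1 ≤ n)
    (p : Polynomial ℝ) (hdeg : p.natDegree = n)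
    (horth : ∀ k : ℕ, k < n → ∫ ω, X ω ^ k * p.eval (X ω) ∂P = 0)
    (r : Fin n → ℝ) (hrinj : Function.Injective r)
    (hroot : ∀ j, p.eval (r j) = 0) :
    ∃! cvec : Fin n → ℝ, ∀ x : ℝ,
      ∫ ω, (X ω - x) ^ (2 * n - 1) ∂P = ∑ j, cvec j * (r j - x) ^ (2 * n - 1) :=
  stmt18_general P X hmom n hn p hdeg horth r hrinj hroot
end
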